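/- arXiv:2305.07451 — 4 statements merged into one kernel-verified Lean document; each statement's English description precedes it below -/
import Mathlib

section
/- Let ρ = (q0,κ0) d1 i1/u1 … dn in/un d(n+1) (q,κ) be a padded timed run of an automaton with timers. Then the index sequences of the blocks of ρ form a partition of the set {1, …, n} of indices of the actions of ρ: every index 1 ≤ k ≤ n belongs to the sequence of exactly one block of ρ. -/
set_option maxHeartbeats 1000000

namespace AwT

/-- Actions of an automaton with timers: reading an input, or processing the timeout of a timer. -/
inductive Act (I X : Type) where
  | input : I → Act I X
  | timeout : X → Act I X

/-- Updates: `some (x, c)` starts timer `x` with positive integer value `c`; `none` is `⊥`. -/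
abbrev Upd (X : Type) := Option (X × ℕ+)

/-- An automaton with timers (AT). `X` is the (finite) set of timers, `I` the (finite) set of
inputs, `Q` the (finite) set of states. -/
structure AT (X I Q : Type) [DecidableEq X] where
  q0 : Q
  χ : Q → Finset X
  δ : Q → Act I X → Option (Q × Upd X)
  init_active : χ q0 = ∅
  defined_iff : ∀ q a, (δ q a).isSome ↔
      (∃ i, a = Act.input i) ∨ (∃ x ∈ χ q, a = Act.timeout x)
  timeout_self : ∀ q x q' y c, δ q (Act.timeout x) = some (q', some (y, c)) → y = x
  noupdate_sub : ∀ q a q', δ q a = some (q', none) → χ q' ⊆ χ q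
  noupdate_timeout : ∀ q x q', δ q (Act.timeout x) = some (q', none) → x ∉ χ q'
  update_mem : ∀ q a q' x c, δ q a = some (q', some (x, c)) → x ∈ χ q'
  update_sub : ∀ q a q' x c, δ q a = some (q', some (x, c)) → χ q' \ {x} ⊆ χ q

variable {X I Q : Type} [DecidableEq X]

/-- A timed run `(q₀,κ₀) d₁ i₁/u₁ … dₙ iₙ/uₙ d_{n+1} (q,κ)` of an AT, with `n` discrete
transitions.  `states k` and `vals k` give the configuration before the `k`-th delay,
`delays k` is the `k`-th delay, and `acts k`/`upds k` are the `k`-th action and update. -/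
structure TimedRun (A : AT X I Q) (n : ℕ) where
  states : Fin (n+1) → Q
  vals : Fin (n+1) → X → ℝ
  delays : Fin (n+1) → ℝ
  acts : Fin n → Act I X
  upds : Fin n → Upd X
  init_state : states 0 = A.q0
  init_val : ∀ x, vals 0 x = 0
  delays_nonneg : ∀ k, 0 ≤ delays k
  delays_le : ∀ k, ∀ x ∈ A.χ (states k), delays k ≤ vals k x
  trans : ∀ k : Fin n, A.δ (states k.castSucc) (acts k) = some (states k.succ, upds k)
  timeout_zero : ∀ (k : Fin n) (x : X), acts k = Act.timeout x →
      vals k.castSucc x - delays k.castSucc = 0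
  val_step : ∀ (k : Fin n) (y : X),
      vals k.succ y = (upds k).elim (vals k.castSucc y - delays k.castSucc)
        (fun p => if y = p.1 then ((p.2 : ℕ) : ℝ) else vals k.castSucc y - delays k.castSucc)

variable {A : AT X I Q} {n : ℕ}

/-- A timed run is padded if its first and last delays are positive and no active timer has
value 0 in its last configuration. -/
def Padded (ρ : TimedRun A n) : Prop :=
  0 < ρ.delays 0 ∧ 0 < ρ.delays (Fin.last n) ∧
    ∀ x ∈ A.χ (ρ.states (Fin.last n)),
      ρ.vals (Fin.last n) x - ρ.delays (Fin.last n) ≠ 0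

/-- Timer fates of blocks: `⊥`, `●` (discarded at value zero), `×`. -/
inductive Fate where
  | bot | disc0 | cross
  deriving DecidableEq

/-- The transition at index `ℓ` discards the timer `x`: `x` is active before the transition,
the action is not `to[x]`, and the transition stops or restarts `x`. -/
def Discards (ρ : TimedRun A n) (ℓ : Fin n) (x : X) : Prop :=
  x ∈ A.χ (ρ.states ℓ.castSucc) ∧ ρ.acts ℓ ≠ Act.timeout x ∧
    (x ∉ A.χ (ρ.states ℓ.succ) ∨ ∃ c, ρ.upds ℓ = some (x, c))

/-- Action `k` triggers action `k'`. -/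
def Triggers (ρ : TimedRun A n) (k k' : Fin n) : Prop :=
  k < k' ∧ ∃ x c, ρ.upds k = some (x, c) ∧ ρ.acts k' = Act.timeout x ∧
    ∀ ℓ, k < ℓ → ℓ < k' → ρ.acts ℓ ≠ Act.timeout x ∧ ¬ Discards ρ ℓ x

/-- After action `k` (which restarts `x`), the first transition discarding `x` does so while the
value of `x` is zero. -/
def DiscardedAtZeroAfter (ρ : TimedRun A n) (k : Fin n) (x : X) : Prop :=
  ∃ ℓ, k < ℓ ∧ Discards ρ ℓ x ∧ (∀ m, k < m → m < ℓ → ¬ Discards ρ m x) ∧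
    ρ.vals ℓ.castSucc x - ρ.delays ℓ.castSucc = 0

/-- `γ` is the timer fate of a block whose index sequence is `ks`. -/
def FateOf (ρ : TimedRun A n) (ks : List (Fin n)) (γ : Fate) : Prop :=
  ∀ k, ks.getLast? = some k →
    ((ρ.upds k = none → γ = Fate.bot) ∧
     ∀ x c, ρ.upds k = some (x, c) →
        ((DiscardedAtZeroAfter ρ k x → γ = Fate.disc0) ∧
         (¬ DiscardedAtZeroAfter ρ k x → γ = Fate.cross)))

/-- `(ks, γ)` is a block of `ρ`: `ks` is a maximal chain of actions each triggering the next,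
starting with an input-action, and `γ` is its timer fate. -/
def IsBlock (ρ : TimedRun A n) (ks : List (Fin n)) (γ : Fate) : Prop :=
  ks ≠ [] ∧ List.Chain' (Triggers ρ) ks ∧
    (∀ k, ks.head? = some k → ∃ i, ρ.acts k = Act.input i) ∧
    (∀ k k', ks.getLast? = some k → ¬ Triggers ρ k k') ∧
    FateOf ρ ks γ

/-- The sum of the delays strictly between action `k` and action `k'` (for `k ≤ k'`). -/
def delayBetween (ρ : TimedRun A n) (k k' : Fin n) : ℝ :=
  ∑ ℓ ∈ Finset.Ioc k k', ρ.delays ℓ.castSucc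

/-- `B ≺ B'`: blocks `B` and `B'` participate in a race, witnessed either by an action of `B`
occurring before an action of `B'` with total delay zero in between, or by an action of `B`
being the first to discard the timer (re)started by the last action of `B'` while it has
value zero. -/
def Prec (ρ : TimedRun A n) (B B' : List (Fin n) × Fate) : Prop :=
  (∃ k ∈ B.1, ∃ k' ∈ B'.1, k < k' ∧ delayBetween ρ k k' = 0) ∨
  (B'.2 = Fate.disc0 ∧ ∃ k' x c, B'.1.getLast? = some k' ∧ ρ.upds k' = some (x, c) ∧
     ∃ ℓ ∈ B.1, k' < ℓ ∧ Discards ρ ℓ x ∧ ∀ m, k' < m → m < ℓ → ¬ Discards ρ m x)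

/-- Two blocks participate in a (common) race. -/
def BlocksRace (ρ : TimedRun A n) (B B' : List (Fin n) × Fate) : Prop :=
  Prec ρ B B' ∨ Prec ρ B' B

/-- The run contains a race. -/
def HasRace (ρ : TimedRun A n) : Prop :=
  ∃ B B' : List (Fin n) × Fate, IsBlock ρ B.1 B.2 ∧ IsBlock ρ B'.1 B'.2 ∧ B ≠ B' ∧
    BlocksRace ρ B B'

/-- The block graph of `ρ` (vertices: blocks, edges: `≺`) has a cycle. -/
def HasCycle (ρ : TimedRun A n) : Prop :=
  ∃ (m : ℕ) (f : Fin (m+1) → List (Fin n) × Fate),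
    0 < m ∧ (∀ j, IsBlock ρ (f j).1 (f j).2) ∧ f (Fin.last m) = f 0 ∧
      ∀ j : Fin m, Prec ρ (f j.castSucc) (f j.succ)

open Classical in
/-- The delays of `ρ` after shifting the block whose set of action indices is `S` by `ε`:
the delay preceding an action of the block whose predecessor is not in the block gains `ε`,
and the delay following an action of the block whose successor is not in the block loses `ε`. -/
noncomputable def wiggledDelay (ρ : TimedRun A n) (S : Set (Fin n)) (ε : ℝ)
    (j : Fin (n+1)) : ℝ :=
  ρ.delays j
    + (if (∃ k : Fin n, k.castSucc = j ∧ k ∈ S ∧ ∀ k' : Fin n, k'.succ = j → k' ∉ S)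
        then ε else 0)
    - (if (∃ k : Fin n, k.succ = j ∧ k ∈ S ∧ ∀ k' : Fin n, k'.castSucc = j → k' ∉ S)
        then ε else 0)

/-- `ρ'` is obtained from `ρ` by shifting the actions with indices in `S` by `ε`. -/
def WiggleSpec (ρ ρ' : TimedRun A n) (S : Set (Fin n)) (ε : ℝ) : Prop :=
  ρ'.states = ρ.states ∧ ρ'.acts = ρ.acts ∧ ρ'.upds = ρ.upds ∧
    ∀ j, ρ'.delays j = wiggledDelay ρ S ε j

/-- The untimed trace of a run: the alternating sequence of states and actions. -/
def untime (ρ : TimedRun A n) : List (Q × Act I X) × Q :=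
  (List.ofFn (fun k : Fin n => (ρ.states k.castSucc, ρ.acts k)), ρ.states (Fin.last n))

/-- The block with index sequence `ks` can be wiggled: for some `ε ≠ 0`, shifting it by `ε`
yields a padded timed run (with the same untimed trace) in which it participates in no race. -/
def CanWiggleBlock (ρ : TimedRun A n) (ks : List (Fin n)) : Prop :=
  ∃ ε : ℝ, ε ≠ 0 ∧ ∃ ρ' : TimedRun A n, WiggleSpec ρ ρ' {k | k ∈ ks} ε ∧ Padded ρ' ∧
    ∀ (γ₁ : Fate) (ks₂ : List (Fin n)) (γ₂ : Fate),
      IsBlock ρ' ks γ₁ → IsBlock ρ' ks₂ γ₂ → (ks, γ₁) ≠ (ks₂, γ₂) →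
        ¬ BlocksRace ρ' (ks, γ₁) (ks₂, γ₂)

/-- One wiggling step: wiggle a single block of `ρ`. -/
def WiggleStep (ρ ρ' : TimedRun A n) : Prop :=
  ∃ (ks : List (Fin n)) (γ : Fate) (ε : ℝ), ε ≠ 0 ∧ IsBlock ρ ks γ ∧
    WiggleSpec ρ ρ' {k | k ∈ ks} ε ∧ Padded ρ' ∧
    ∀ (γ₁ : Fate) (ks₂ : List (Fin n)) (γ₂ : Fate),
      IsBlock ρ' ks γ₁ → IsBlock ρ' ks₂ γ₂ → (ks, γ₁) ≠ (ks₂, γ₂) →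
        ¬ BlocksRace ρ' (ks, γ₁) (ks₂, γ₂)

/-- `ρ` can be wiggled: wiggling its blocks one at a time yields a race-free padded run with
the same untimed trace. -/
def Wigglable (ρ : TimedRun A n) : Prop :=
  ∃ ρ' : TimedRun A n, Relation.ReflTransGen WiggleStep ρ ρ' ∧ Padded ρ' ∧
    ¬ HasRace ρ' ∧ untime ρ' = untime ρ

/-- `A` is race-avoiding. -/
def RaceAvoiding (A : AT X I Q) : Prop :=
  ∀ (n : ℕ) (ρ : TimedRun A n), Padded ρ → HasRace ρ →
    ∃ (n' : ℕ) (ρ' : TimedRun A n'), Padded ρ' ∧ ¬ HasRace ρ' ∧ untime ρ' = untime ρ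

/-- All delays of the run are strictly positive. -/
def AllPos (ρ : TimedRun A n) : Prop := ∀ j, 0 < ρ.delays j

/-- `ks` is (the index sequence of) an `x`-block: its actions (re)start the timer `x`. -/
def IsXBlock (ρ : TimedRun A n) (ks : List (Fin n)) (x : X) : Prop :=
  ∃ k ∈ ks, ∃ c, ρ.upds k = some (x, c)

/-- Modified semantics from a total order on timers: in every race, any action of an `x`-block
is processed before any action of a `y`-block whenever `x < y`. -/
def OrderedSem [LT X] (ρ : TimedRun A n) : Prop :=
  ∀ (ks : List (Fin n)) (γ : Fate) (ks' : List (Fin n)) (γ' : Fate) (x y : X),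
    IsBlock ρ ks γ → IsBlock ρ ks' γ' → IsXBlock ρ ks x → IsXBlock ρ ks' y → x < y →
      ∀ k ∈ ks, ∀ k' ∈ ks',
        ((k < k' ∧ delayBetween ρ k k' = 0) ∨ (k' < k ∧ delayBetween ρ k' k = 0)) → k < k'

/-! ### Configurations, timer-equivalence and the region automaton -/

/-- Valuations `κ, κ'` (on the active timers of `q`) are timer-equivalent. -/
def ValEquiv (A : AT X I Q) (q : Q) (κ κ' : X → ℝ) : Prop :=
  ∀ x ∈ A.χ q, (⌊κ x⌋ = ⌊κ' x⌋) ∧ (Int.fract (κ x) = 0 ↔ Int.fract (κ' x) = 0) ∧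
    ∀ y ∈ A.χ q, (Int.fract (κ x) ≤ Int.fract (κ y) ↔ Int.fract (κ' x) ≤ Int.fract (κ' y))

/-- Timer-equivalence of configurations. -/
def ConfigEquiv (A : AT X I Q) (c c' : Q × (X → ℝ)) : Prop :=
  c.1 = c'.1 ∧ ValEquiv A c.1 c.2 c'.2

/-- A discrete transition between configurations, on action `a` with update `u`. -/
def DiscreteStep (A : AT X I Q) (c : Q × (X → ℝ)) (a : Act I X) (u : Upd X)
    (c' : Q × (X → ℝ)) : Prop :=
  A.δ c.1 a = some (c'.1, u) ∧ (∀ x, a = Act.timeout x → c.2 x = 0) ∧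
    ∀ y ∈ A.χ c'.1,
      c'.2 y = u.elim (c.2 y) (fun p => if y = p.1 then ((p.2 : ℕ) : ℝ) else c.2 y)

/-- A delay transition between configurations, of duration `d ≥ 0`. -/
def DelayStep (A : AT X I Q) (c : Q × (X → ℝ)) (d : ℝ) (c' : Q × (X → ℝ)) : Prop :=
  0 ≤ d ∧ c'.1 = c.1 ∧ (∀ x ∈ A.χ c.1, d ≤ c.2 x) ∧ ∀ x ∈ A.χ c.1, c'.2 x = c.2 x - d

/-- One step of a timed run between configurations: a delay or a discrete transition. -/
def Step (A : AT X I Q) (c c' : Q × (X → ℝ)) : Prop :=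
  (∃ d, DelayStep A c d c') ∨ (∃ a u, DiscreteStep A c a u c')

/-- One transition of the region automaton between the classes of `c` and `c'`:
some representatives are related by a positive delay (`τ`) or a discrete transition. -/
def RegStep (A : AT X I Q) (c c' : Q × (X → ℝ)) : Prop :=
  ∃ c₁ c₂, ConfigEquiv A c c₁ ∧ ConfigEquiv A c' c₂ ∧
    ((∃ d, 0 < d ∧ DelayStep A c₁ d c₂) ∨ ∃ a u, DiscreteStep A c₁ a u c₂)

/-! ### The extended run and relative elapsed time -/

open Classical in
/-- The timers discarded by the transition at index `k`. -/
noncomputable def discardedSet (ρ : TimedRun A n) (k : Fin n) : Finset X :=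
  (A.χ (ρ.states k.castSucc)).filter (fun x => Discards ρ k x)

/-- Positions of actions in the extended run of `ρ`: `(k, 0)` is the `k`-th action of `ρ`,
and `(k, j)` for `1 ≤ j` is the `j`-th zero-delay pseudo-action (`●` or `×`) inserted after
it, one for each timer it discards. -/
def EPos (ρ : TimedRun A n) : Type := {p : Fin n × ℕ // p.2 ≤ (discardedSet ρ p.1).card}

open Classical in
/-- Relative elapsed time between two positions of the extended run: the sum `d` of the delays
between them if the first occurs (weakly) before the second, and `-d` otherwise. -/
noncomputable def reltime (ρ : TimedRun A n) (p p' : EPos ρ) : ℝ :=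
  if p.1.1 < p'.1.1 ∨ (p.1.1 = p'.1.1 ∧ p.1.2 ≤ p'.1.2) then delayBetween ρ p.1.1 p'.1.1
  else - delayBetween ρ p'.1.1 p.1.1

end AwT

/-! ### Linear-bounded Turing machines -/

/-- A (nondeterministic) linear-bounded Turing machine with alphabet `σ` and states `Q`.
A transition `(q, α, α', D, q')` reads `α`, writes `α'` and moves left (`D = false`) or
right (`D = true`). -/
structure LBTM (σ Q : Type) where
  q0 : Q
  qF : Q
  T : Finset (Q × σ × σ × Bool × Q)

/-- One step of an LBTM on a tape of length `n`; configurations are (state, tape, head). -/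
def LBTMStep {σ Q : Type} (M : LBTM σ Q) {n : ℕ}
    (c c' : Q × (Fin n → σ) × Fin n) : Prop :=
  ∃ α' : σ, ∃ D : Bool, (c.1, c.2.1 c.2.2, α', D, c'.1) ∈ M.T ∧
    c'.2.1 = Function.update c.2.1 c.2.2 α' ∧
    ((D = true ∧ (c'.2.2 : ℕ) = (c.2.2 : ℕ) + 1) ∨
     (D = false ∧ (c.2.2 : ℕ) = (c'.2.2 : ℕ) + 1))

/-- `M` accepts the word `w`. -/
def LBTMAccepts {σ Q : Type} (M : LBTM σ Q) {n : ℕ} (hn : 0 < n) (w : Fin n → σ) : Prop :=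
  ∃ c : Q × (Fin n → σ) × Fin n,
    Relation.ReflTransGen (LBTMStep M) (M.q0, w, ⟨0, hn⟩) c ∧ c.1 = M.qF


/-! Every timeout `to[x]` is triggered by the last earlier action that (re)started `x`, and
triggering is injective on both sides and increases indices. So the triggering graph is a
disjoint union of paths, each beginning at an input action (inputs are never triggered); the
blocks are exactly these paths, and the fate of a block is determined by its last action. -/

namespace List

variable {α : Type*} {R : α → α → Prop}

theorem exists_isChain_cons_of_wellFounded_flip {P : α → Prop} (hwf : WellFounded (flip R))
    (hP : ∀ a, ¬ P a → ∃ b, R a b) (a : α) :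
    ∃ t, IsChain R (a :: t) ∧ ∀ z, (a :: t).getLast? = some z → P z := by
  induction a using hwf.induction with
  | _ a ih =>
    by_cases ha : P a
    · exact ⟨[], .singleton a, by simpa using ha⟩
    obtain ⟨b, hab⟩ := hP a ha
    obtain ⟨t, hchain, hlast⟩ := ih b hab
    exact ⟨b :: t, hchain.cons_cons hab, by simpa using hlast⟩

theorem exists_isChain_append_singleton_of_wellFounded {P : α → Prop} (hwf : WellFounded R)
    (hP : ∀ b, ¬ P b → ∃ a, R a b) (b : α) :
    ∃ s, IsChain R (s ++ [b]) ∧ ∀ z, (s ++ [b]).head? = some z → P z := by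
  obtain ⟨t, hchain, hlast⟩ :=
    exists_isChain_cons_of_wellFounded_flip (R := flip R) (by simpa [flip] using hwf) hP b
  refine ⟨t.reverse, ?_, ?_⟩
  · simpa [flip] using isChain_reverse.mpr hchain
  · simpa [← head?_reverse] using hlast

theorem exists_isChain_of_wellFounded {P Q : α → Prop} (hwf : WellFounded R)
    (hwf' : WellFounded (flip R)) (hP : ∀ b, ¬ P b → ∃ a, R a b) (hQ : ∀ a, ¬ Q a → ∃ b, R a b)
    (a : α) :
    ∃ l, IsChain R l ∧ a ∈ l ∧ (∀ z, l.head? = some z → P z) ∧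
      ∀ z, l.getLast? = some z → Q z := by
  obtain ⟨s, hs, hhead⟩ := exists_isChain_append_singleton_of_wellFounded hwf hP a
  obtain ⟨t, ht, hlast⟩ := exists_isChain_cons_of_wellFounded_flip hwf' hQ a
  refine ⟨s ++ [a] ++ t, hs.append_overlap ht (cons_ne_nil a []), by simp, ?_, ?_⟩
  · simpa [head?_append_of_ne_nil] using hhead
  · simpa [getLast?_append_of_ne_nil] using hlast

theorem IsChain.tail_eq_of_rightUnique (hR : Relator.RightUnique R) {a : α}
    {t t' : List α} (h : IsChain R (a :: t)) (h' : IsChain R (a :: t'))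
    (hmax : ∀ z b, (a :: t).getLast? = some z → ¬ R z b)
    (hmax' : ∀ z b, (a :: t').getLast? = some z → ¬ R z b) : t = t' := by
  induction t generalizing a t' with
  | nil =>
    cases t' with
    | nil => rfl
    | cons b t' => exact absurd (isChain_cons_cons.mp h').1 (hmax a b rfl)
  | cons b t ih =>
    cases t' with
    | nil => exact absurd (isChain_cons_cons.mp h).1 (hmax' a b rfl)
    | cons b' t' =>
      obtain ⟨hab, h⟩ := isChain_cons_cons.mp h
      obtain ⟨hab', h'⟩ := isChain_cons_cons.mp h'
      obtain rfl := hR hab hab'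
      rw [ih h h' (by simpa using hmax) (by simpa using hmax')]

theorem IsChain.init_eq_of_leftUnique (hR : Relator.LeftUnique R) {a : α}
    {s s' : List α} (h : IsChain R (s ++ [a])) (h' : IsChain R (s' ++ [a]))
    (hmin : ∀ z b, (s ++ [a]).head? = some z → ¬ R b z)
    (hmin' : ∀ z b, (s' ++ [a]).head? = some z → ¬ R b z) : s = s' := by
  have hrev : s.reverse = s'.reverse := by
    refine IsChain.tail_eq_of_rightUnique (R := flip R) (a := a) hR.flip ?_ ?_ ?_ ?_
    · simpa using isChain_reverse (R := flip R) |>.mpr h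
    · simpa using isChain_reverse (R := flip R) |>.mpr h'
    · simpa [flip, ← head?_reverse] using hmin
    · simpa [flip, ← head?_reverse] using hmin'
  exact reverse_inj.mp hrev

theorem eq_of_mem_of_isChain_of_biUnique (hR : Relator.BiUnique R) {l₁ l₂ : List α} {a : α}
    (h₁ : IsChain R l₁) (h₂ : IsChain R l₂)
    (hmin₁ : ∀ z b, l₁.head? = some z → ¬ R b z) (hmin₂ : ∀ z b, l₂.head? = some z → ¬ R b z)
    (hmax₁ : ∀ z b, l₁.getLast? = some z → ¬ R z b) (hmax₂ : ∀ z b, l₂.getLast? = some z → ¬ R z b)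
    (ha₁ : a ∈ l₁) (ha₂ : a ∈ l₂) : l₁ = l₂ := by
  obtain ⟨s₁, t₁, rfl⟩ := append_of_mem ha₁
  obtain ⟨s₂, t₂, rfl⟩ := append_of_mem ha₂
  have htail : t₁ = t₂ :=
    h₁.right_of_append.tail_eq_of_rightUnique hR.right h₂.right_of_append
      (by simpa [getLast?_append_of_ne_nil] using hmax₁)
      (by simpa [getLast?_append_of_ne_nil] using hmax₂)
  rw [append_cons] at h₁ h₂ hmin₁ hmin₂
  have hinit : s₁ = s₂ :=
    h₁.left_of_append.init_eq_of_leftUnique hR.left h₂.left_of_append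
      (by simpa [head?_append_of_ne_nil] using hmin₁)
      (by simpa [head?_append_of_ne_nil] using hmin₂)
  rw [hinit, htail]

end List

namespace AwT

variable {X I Q : Type} [DecidableEq X] {A : AT X I Q} {n : ℕ}

namespace TimedRun

variable (ρ : TimedRun A n) {m : Fin n} {x : X}

theorem mem_χ_castSucc_of_mem_χ_succ (hx : x ∈ A.χ (ρ.states m.succ))
    (hu : ∀ c, ρ.upds m ≠ some (x, c)) : x ∈ A.χ (ρ.states m.castSucc) := by
  have ht := ρ.trans m
  rcases hupd : ρ.upds m with _ | ⟨y, c⟩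
  · rw [hupd] at ht
    exact A.noupdate_sub _ _ _ ht hx
  · rw [hupd] at ht
    have hxy : x ≠ y := by rintro rfl; exact hu c hupd
    exact A.update_sub _ _ _ _ _ ht (by simp [hx, hxy])

theorem mem_χ_succ_of_not_discards (hx : x ∈ A.χ (ρ.states m.castSucc))
    (hto : ρ.acts m ≠ Act.timeout x) (hd : ¬ Discards ρ m x) : x ∈ A.χ (ρ.states m.succ) := by
  by_contra hx'
  exact hd ⟨hx, hto, Or.inl hx'⟩

theorem not_timeout_and_not_discards_of_mem_χ_succ (hx : x ∈ A.χ (ρ.states m.succ))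
    (hu : ∀ c, ρ.upds m ≠ some (x, c)) : ρ.acts m ≠ Act.timeout x ∧ ¬ Discards ρ m x := by
  refine ⟨fun hto => ?_, fun ⟨_, _, hd⟩ => hd.elim (· hx) fun ⟨c, hc⟩ => hu c hc⟩
  have ht := ρ.trans m
  rw [hto] at ht
  rcases hupd : ρ.upds m with _ | ⟨y, c⟩
  · rw [hupd] at ht
    exact A.noupdate_timeout _ _ _ ht hx
  · rw [hupd] at ht
    obtain rfl := A.timeout_self _ _ _ _ _ ht
    exact hu c hupd

theorem mem_χ_of_restart {ℓ : Fin n} {c : ℕ+} (hℓ : ρ.upds ℓ = some (x, c)) (j : Fin (n + 1))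
    (hj : ℓ.succ ≤ j)
    (hkeep : ∀ m, ℓ < m → m.castSucc < j → ρ.acts m ≠ Act.timeout x ∧ ¬ Discards ρ m x) :
    x ∈ A.χ (ρ.states j) := by
  induction j using Fin.induction with
  | zero => exact absurd hj (Fin.succ_pos ℓ).not_ge
  | succ m ih =>
    rcases (Fin.succ_le_succ_iff.mp hj).eq_or_lt with rfl | hℓm
    · have ht := ρ.trans ℓ
      rw [hℓ] at ht
      exact A.update_mem _ _ _ _ _ ht
    · obtain ⟨hto, hd⟩ := hkeep m hℓm (Fin.castSucc_lt_succ (i := m))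
      refine ρ.mem_χ_succ_of_not_discards (ih (Fin.succ_le_castSucc_iff.mpr hℓm) ?_) hto hd
      exact fun m' h1 h2 => hkeep m' h1 (h2.trans (Fin.castSucc_lt_succ (i := m)))

theorem exists_last_restart (j : Fin (n + 1)) (hx : x ∈ A.χ (ρ.states j)) :
    ∃ ℓ : Fin n, ℓ.succ ≤ j ∧ (∃ c, ρ.upds ℓ = some (x, c)) ∧
      ∀ m, ℓ < m → m.castSucc < j → ρ.acts m ≠ Act.timeout x ∧ ¬ Discards ρ m x := by
  induction j using Fin.induction with
  | zero => simp [ρ.init_state, A.init_active] at hx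
  | succ m ih =>
    by_cases hu : ∃ c, ρ.upds m = some (x, c)
    · exact ⟨m, le_rfl, hu, fun m' h1 h2 => absurd (Fin.castSucc_lt_succ_iff.mp h2) h1.not_ge⟩
    push Not at hu
    obtain ⟨ℓ, hℓm, hℓ, hkeep⟩ := ih (ρ.mem_χ_castSucc_of_mem_χ_succ hx hu)
    refine ⟨ℓ, hℓm.trans (Fin.castSucc_lt_succ (i := m)).le, hℓ, fun m' h1 h2 => ?_⟩
    rcases (Fin.castSucc_lt_succ_iff.mp h2).eq_or_lt with rfl | h2
    · exact ρ.not_timeout_and_not_discards_of_mem_χ_succ hx hu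
    · exact hkeep m' h1 h2

end TimedRun

variable {ρ : TimedRun A n} {j k : Fin n}

theorem rightUnique_triggers : Relator.RightUnique (Triggers ρ) := by
  intro k k₁ k₂ h₁ h₂
  wlog hlt : k₁ < k₂ generalizing k₁ k₂
  · rcases (not_lt.mp hlt).eq_or_lt with heq | hgt
    · exact heq.symm
    · exact (this h₂ h₁ hgt).symm
  obtain ⟨hk₁, x, c, hu, hto, -⟩ := h₁
  obtain ⟨-, x', c', hu', -, hkeep⟩ := h₂
  obtain ⟨rfl, -⟩ := Prod.mk.inj (Option.some.inj (hu.symm.trans hu'))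
  exact absurd hto (hkeep k₁ hk₁ hlt).1

theorem leftUnique_triggers : Relator.LeftUnique (Triggers ρ) := by
  intro k₁ k₂ k h₁ h₂
  wlog hlt : k₁ < k₂ generalizing k₁ k₂
  · rcases (not_lt.mp hlt).eq_or_lt with heq | hgt
    · exact heq.symm
    · exact (this h₂ h₁ hgt).symm
  obtain ⟨-, x, c, hu, hto, hkeep⟩ := h₁
  obtain ⟨hk₂, x', c', hu', hto', -⟩ := h₂
  obtain rfl : x = x' := Act.timeout.inj (hto.symm.trans hto')
  -- `k₂` restarts `x` while it is still running from `k₁`, so it discards it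
  have hx : x ∈ A.χ (ρ.states k₂.castSucc) :=
    ρ.mem_χ_of_restart hu _ (Fin.succ_le_castSucc_iff.mpr hlt)
      fun m h1 h2 => hkeep m h1 ((Fin.castSucc_lt_castSucc_iff.mp h2).trans hk₂)
  obtain ⟨hto₂, hd⟩ := hkeep k₂ hlt hk₂
  exact (hd ⟨hx, hto₂, Or.inr ⟨c', hu'⟩⟩).elim

theorem exists_triggers_of_timeout {x : X} (hto : ρ.acts k = Act.timeout x) :
    ∃ j, Triggers ρ j k := by
  have hx : x ∈ A.χ (ρ.states k.castSucc) := by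
    rcases (A.defined_iff _ _).mp (Option.isSome_of_eq_some (ρ.trans k)) with ⟨i, hi⟩ | ⟨y, hy, hi⟩
    · simp [hto] at hi
    · rwa [Act.timeout.inj (hto.symm.trans hi)]
  obtain ⟨ℓ, hℓk, ⟨c, hc⟩, hkeep⟩ := ρ.exists_last_restart _ hx
  exact ⟨ℓ, Fin.succ_le_castSucc_iff.mp hℓk, x, c, hc, hto,
    fun m h1 h2 => hkeep m h1 (Fin.castSucc_lt_castSucc_iff.mpr h2)⟩

theorem not_triggers_of_input {i : I} (hin : ρ.acts k = Act.input i) : ¬ Triggers ρ j k := by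
  rintro ⟨-, x, c, -, hto, -⟩
  simp [hin] at hto

theorem IsBlock.eq_of_mem {ks ks' : List (Fin n)} {γ γ' : Fate} (hb : IsBlock ρ ks γ)
    (hb' : IsBlock ρ ks' γ') (hk : k ∈ ks) (hk' : k ∈ ks') : ks = ks' :=
  List.eq_of_mem_of_isChain_of_biUnique ⟨leftUnique_triggers, rightUnique_triggers⟩ hb.2.1 hb'.2.1
    (fun z _ hz => have ⟨_, hin⟩ := hb.2.2.1 z hz; not_triggers_of_input hin)
    (fun z _ hz => have ⟨_, hin⟩ := hb'.2.2.1 z hz; not_triggers_of_input hin)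
    hb.2.2.2.1 hb'.2.2.2.1 hk hk'

theorem existsUnique_fateOf {ks : List (Fin n)} (hks : ks ≠ []) : ∃! γ, FateOf ρ ks γ := by
  obtain ⟨l, hl⟩ := Option.ne_none_iff_exists'.mp (mt List.getLast?_eq_none_iff.mp hks)
  simp only [FateOf, hl, Option.some.injEq, forall_eq']
  rcases ρ.upds l with _ | ⟨x, c⟩
  · simp
  · by_cases hd : DiscardedAtZeroAfter ρ l x <;> simp [hd]

theorem exists_isBlock_mem (k : Fin n) : ∃ ks γ, IsBlock ρ ks γ ∧ k ∈ ks := by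
  have htriggered : ∀ b, ¬ (∃ i, ρ.acts b = Act.input i) → ∃ a, Triggers ρ a b := by
    intro b hb
    rcases hact : ρ.acts b with i | x
    · exact absurd ⟨i, hact⟩ hb
    · exact exists_triggers_of_timeout hact
  obtain ⟨ks, hchain, hk, hhead, hlast⟩ := List.exists_isChain_of_wellFounded
    (Subrelation.wf (q := Triggers ρ) (fun h => h.1) wellFounded_lt)
    (Subrelation.wf (q := flip (Triggers ρ)) (fun h => h.1) wellFounded_gt)
    htriggered (Q := fun z => ∀ b, ¬ Triggers ρ z b) (fun a ha => by simpa using ha) k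
  have hks : ks ≠ [] := List.ne_nil_of_mem hk
  obtain ⟨γ, hγ, -⟩ := existsUnique_fateOf (ρ := ρ) hks
  exact ⟨ks, γ, ⟨hks, hchain, hhead, fun z b hz => hlast z hz b, hγ⟩, hk⟩

end AwT

theorem blocks_partition_general {X I Q : Type} [DecidableEq X]
    (A : AwT.AT X I Q) (n : ℕ) (ρ : AwT.TimedRun A n) (k : Fin n) :
    ∃! B : List (Fin n) × AwT.Fate, AwT.IsBlock ρ B.1 B.2 ∧ k ∈ B.1 := by
  obtain ⟨ks, γ, hb, hk⟩ := AwT.exists_isBlock_mem (ρ := ρ) k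
  refine ⟨(ks, γ), ⟨hb, hk⟩, fun ⟨ks', γ'⟩ ⟨hb', hk'⟩ => ?_⟩
  obtain rfl : ks' = ks := hb'.eq_of_mem hb hk' hk
  obtain rfl : γ' = γ := (AwT.existsUnique_fateOf hb.1).unique hb'.2.2.2.2 hb.2.2.2.2
  rfl

/-- The index sequences of the blocks of a padded timed run `ρ` form a
partition of the set of indices of the actions of `ρ`: every action index belongs to the
sequence of exactly one block. -/
theorem blocks_partition {X I Q : Type} [DecidableEq X] [Fintype X] [Fintype I] [Fintype Q]
    (A : AwT.AT X I Q) (n : ℕ) (ρ : AwT.TimedRun A n) (hρ : AwT.Padded ρ) (k : Fin n) :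
    ∃! B : List (Fin n) × AwT.Fate, AwT.IsBlock ρ B.1 B.2 ∧ k ∈ B.1 :=
  blocks_partition_general A n ρ k
end

section
/- Let X be a finite set and C ∈ ℕ. Define two functions κ, κ' : X → [0, C] ⊆ ℝ≥0 to be timer-equivalent (κ ≅ κ') iff for all x1, x2 ∈ X: ⌊κ(x1)⌋ = ⌊κ'(x1)⌋; the fractional part of κ(x1) is 0 iff the fractional part of κ'(x1) is 0; and frac(κ(x1)) ≤ frac(κ(x2)) iff frac(κ'(x1)) ≤ frac(κ'(x2)). Then ≅ is an equivalence relation, and the number of equivalence classes of ≅ is at most |X|! · 2^|X| · (C+1)^|X|. -/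
def TimerEquivRel {X : Type} (C : ℕ)
    (κ κ' : {f : X → ℝ // ∀ x, f x ∈ Set.Icc (0 : ℝ) C}) : Prop :=
  ∀ x1 x2 : X,
    ⌊κ.1 x1⌋ = ⌊κ'.1 x1⌋ ∧
    (Int.fract (κ.1 x1) = 0 ↔ Int.fract (κ'.1 x1) = 0) ∧
    (Int.fract (κ.1 x1) ≤ Int.fract (κ.1 x2) ↔ Int.fract (κ'.1 x1) ≤ Int.fract (κ'.1 x2))

namespace TimerAux


open Classical

variable {X : Type} [Fintype X]

/-- strict lex-like linear order used to sort by `g`, tie-broken by `e`. -/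
def tlt (e : X ≃ Fin (Fintype.card X)) (g : X → ℝ) (y x : X) : Prop :=
  g y < g x ∨ (g y = g x ∧ e y < e x)

lemma tlt_trans {e : X ≃ Fin (Fintype.card X)} {g : X → ℝ} {a b c : X}
    (h1 : tlt e g a b) (h2 : tlt e g b c) : tlt e g a c := by
  rcases h1 with h | ⟨h, h'⟩ <;> rcases h2 with k | ⟨k, k'⟩
  · exact Or.inl (h.trans k)
  · exact Or.inl (k ▸ h)
  · exact Or.inl (h ▸ k)
  · exact Or.inr ⟨h.trans k, h'.trans k'⟩

lemma tlt_irrefl {e : X ≃ Fin (Fintype.card X)} {g : X → ℝ} {a : X} : ¬ tlt e g a a := by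
  rintro (h | ⟨h, h'⟩)
  · exact lt_irrefl _ h
  · exact lt_irrefl _ h'

lemma tlt_total {e : X ≃ Fin (Fintype.card X)} {g : X → ℝ} {a b : X} (hab : a ≠ b) :
    tlt e g a b ∨ tlt e g b a := by
  rcases lt_trichotomy (g a) (g b) with h | h | h
  · exact Or.inl (Or.inl h)
  · rcases lt_or_gt_of_ne (fun he => hab (e.injective he)) with h' | h'
    · exact Or.inl (Or.inr ⟨h, h'⟩)
    · exact Or.inr (Or.inr ⟨h.symm, h'⟩)
  · exact Or.inr (Or.inl h)

noncomputable def trank (e : X ≃ Fin (Fintype.card X)) (g : X → ℝ) (x : X) : ℕ :=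
  (Finset.univ.filter (fun y => tlt e g y x)).card

lemma trank_lt_card (e : X ≃ Fin (Fintype.card X)) (g : X → ℝ) (x : X) :
    trank e g x < Fintype.card X := by
  rw [← Finset.card_univ]
  apply Finset.card_lt_card
  refine ⟨Finset.filter_subset _ _, fun hsub => ?_⟩
  have := hsub (Finset.mem_univ x)
  rw [Finset.mem_filter] at this
  exact tlt_irrefl this.2

lemma trank_lt_of_tlt {e : X ≃ Fin (Fintype.card X)} {g : X → ℝ} {a b : X}
    (h : tlt e g a b) : trank e g a < trank e g b := by
  apply Finset.card_lt_card
  constructor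
  · intro z hz
    rw [Finset.mem_filter] at hz ⊢
    exact ⟨hz.1, tlt_trans hz.2 h⟩
  · intro hsub
    have := hsub (by simpa [Finset.mem_filter] using h)
    rw [Finset.mem_filter] at this
    exact tlt_irrefl this.2

noncomputable def tperm (e : X ≃ Fin (Fintype.card X)) (g : X → ℝ) :
    X ≃ Fin (Fintype.card X) :=
  Equiv.ofBijective (fun x => ⟨trank e g x, trank_lt_card e g x⟩)
    ((Fintype.bijective_iff_injective_and_card _).2
      ⟨by
        intro a b hab
        by_contra hne
        have hv : trank e g a = trank e g b := congrArg Fin.val hab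
        rcases tlt_total (e := e) (g := g) hne with h | h
        · exact absurd hv (Nat.ne_of_lt (trank_lt_of_tlt h))
        · exact absurd hv.symm (Nat.ne_of_lt (trank_lt_of_tlt h)), by simp⟩)

lemma tperm_mono {e : X ≃ Fin (Fintype.card X)} {g : X → ℝ} {a b : X}
    (h : tperm e g a ≤ tperm e g b) : g a ≤ g b := by
  by_contra h'
  push_neg at h'
  have : trank e g b < trank e g a := trank_lt_of_tlt (Or.inl h')
  have h2 : (tperm e g a : ℕ) ≤ (tperm e g b : ℕ) := h
  simp only [tperm, Equiv.ofBijective_apply] at h2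
  omega

lemma tperm_congr {e : X ≃ Fin (Fintype.card X)} {g g' : X → ℝ}
    (hiff : ∀ y x, tlt e g y x ↔ tlt e g' y x) : tperm e g = tperm e g' := by
  apply Equiv.ext
  intro x
  apply Fin.ext
  simp only [tperm, Equiv.ofBijective_apply]
  unfold trank
  congr 1
  exact Finset.filter_congr (fun y _ => by rw [hiff])



lemma zero_iff_bits {n : ℕ} {s : Fin n → ℝ} {c : Fin n → Bool}
    (hmono : ∀ i j : Fin n, i ≤ j → s i ≤ s j) (hnn : ∀ i, 0 ≤ s i)
    (hc : ∀ j : Fin n, c j = true ↔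
      s j = (if h : j.1 = 0 then 0 else s ⟨j.1 - 1, lt_of_le_of_lt (Nat.pred_le _) j.2⟩)) :
    ∀ (m : ℕ) (hm : m < n), (s ⟨m, hm⟩ ≤ 0 ↔ ∀ j : Fin n, j.1 ≤ m → c j = true) := by
  intro m
  induction m with
  | zero =>
    intro hm
    constructor
    · intro h0 j hj
      have hj0 : j = ⟨0, hm⟩ := Fin.ext (Nat.le_zero.mp hj)
      subst hj0
      rw [hc]
      simp only [dif_pos rfl]
      exact le_antisymm h0 (hnn _)
    · intro hb
      have := (hc ⟨0, hm⟩).1 (hb ⟨0, hm⟩ (le_refl 0))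
      simp only [dif_pos rfl] at this
      exact le_of_eq this
  | succ m ih =>
    intro hm
    have hm' : m < n := lt_trans (Nat.lt_succ_self m) hm
    have hstep : s ⟨m, hm'⟩ ≤ s ⟨m + 1, hm⟩ := hmono _ _ (by simp [Fin.le_def])
    constructor
    · intro h0 j hj
      rcases Nat.lt_succ_iff_lt_or_eq.mp (Nat.lt_succ_of_le hj) with hj' | hj'
      · exact (ih hm').1 (le_trans hstep h0) j (Nat.lt_succ_iff.mp hj')
      · have hje : j = ⟨m + 1, hm⟩ := Fin.ext hj'
        subst hje
        rw [hc]
        rw [dif_neg (by simp)]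
        have h1 : s ⟨m + 1, hm⟩ = 0 := le_antisymm h0 (hnn _)
        have h2 : s ⟨m, hm'⟩ = 0 := le_antisymm (le_trans hstep h0) (hnn _)
        simp only [Nat.add_sub_cancel]
        rw [h1, h2]
    · intro hb
      have h1 : s ⟨m, hm'⟩ ≤ 0 := (ih hm').2 (fun j hj => hb j (le_trans hj (Nat.le_succ m)))
      have h2 := (hc ⟨m + 1, hm⟩).1 (hb ⟨m + 1, hm⟩ (le_refl _))
      rw [dif_neg (by simp)] at h2
      simp only [Nat.add_sub_cancel] at h2
      rw [h2]
      exact h1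

lemma le_iff_bits {n : ℕ} {s : Fin n → ℝ} {c : Fin n → Bool}
    (hmono : ∀ i j : Fin n, i ≤ j → s i ≤ s j)
    (hc : ∀ j : Fin n, c j = true ↔
      s j = (if h : j.1 = 0 then 0 else s ⟨j.1 - 1, lt_of_le_of_lt (Nat.pred_le _) j.2⟩)) :
    ∀ (d : ℕ) (k : Fin n) (h : k.1 + d < n),
      (s ⟨k.1 + d, h⟩ ≤ s k ↔ ∀ j : Fin n, k.1 < j.1 → j.1 ≤ k.1 + d → c j = true) := by
  intro d
  induction d with
  | zero =>
    intro k h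
    have : (⟨k.1 + 0, h⟩ : Fin n) = k := Fin.ext (show k.1 + 0 = k.1 by omega)
    rw [this]
    constructor
    · intro _ j hj1 hj2
      omega
    · intro _
      exact le_refl _
  | succ d ih =>
    intro k h
    have h' : k.1 + d < n := by omega
    have hmid : s k ≤ s ⟨k.1 + d, h'⟩ := hmono _ _ (by simp [Fin.le_def])
    have hstep : s ⟨k.1 + d, h'⟩ ≤ s ⟨k.1 + d + 1, by omega⟩ := hmono _ _ (by simp [Fin.le_def])
    have hsplit : s ⟨k.1 + (d + 1), h⟩ ≤ s k ↔
        (s ⟨k.1 + (d + 1), h⟩ ≤ s ⟨k.1 + d, h'⟩ ∧ s ⟨k.1 + d, h'⟩ ≤ s k) := by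
      have he : (⟨k.1 + (d + 1), h⟩ : Fin n) = ⟨k.1 + d + 1, by omega⟩ :=
        Fin.ext (show k.1 + (d + 1) = k.1 + d + 1 by omega)
      rw [he]
      constructor
      · intro hle
        exact ⟨le_trans hle hmid, le_trans hstep hle⟩
      · intro ⟨a, b⟩
        exact le_trans a b
    rw [hsplit]
    have hfirst : (s ⟨k.1 + (d + 1), h⟩ ≤ s ⟨k.1 + d, h'⟩) ↔ c ⟨k.1 + (d + 1), h⟩ = true := by
      rw [hc ⟨k.1 + (d + 1), h⟩]
      rw [dif_neg (show ¬ k.1 + (d + 1) = 0 by omega)]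
      have he : (⟨k.1 + (d + 1) - 1, lt_of_le_of_lt (Nat.sub_le _ _) h⟩ : Fin n)
          = ⟨k.1 + d, h'⟩ := Fin.ext (show k.1 + (d + 1) - 1 = k.1 + d by omega)
      rw [he]
      constructor
      · intro hle
        exact le_antisymm hle (by
          have he2 : (⟨k.1 + (d + 1), h⟩ : Fin n) = ⟨k.1 + d + 1, by omega⟩ :=
            Fin.ext (show k.1 + (d + 1) = k.1 + d + 1 by omega)
          rw [he2]; exact hstep)
      · intro heq
        exact le_of_eq heq
    rw [hfirst, ih k h']
    constructor
    · intro ⟨hcb, hall⟩ j hj1 hj2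
      rcases Nat.lt_or_ge j.1 (k.1 + (d + 1)) with hj3 | hj3
      · exact hall j hj1 (by omega)
      · have : j = ⟨k.1 + (d + 1), h⟩ := Fin.ext (show j.1 = k.1 + (d + 1) by omega)
        rw [this]; exact hcb
    · intro hall
      exact ⟨hall ⟨k.1 + (d + 1), h⟩ (show k.1 < k.1 + (d + 1) by omega)
        (le_of_eq rfl), fun j hj1 hj2 => hall j hj1 (by omega)⟩


lemma tperm_congr' {e : X ≃ Fin (Fintype.card X)} {g g' : X → ℝ}
    (h1 : ∀ a b, g a < g b ↔ g' a < g' b) (h2 : ∀ a b, g a = g b ↔ g' a = g' b) :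
    tperm e g = tperm e g' :=
  tperm_congr (fun y x => or_congr (h1 y x) (and_congr_left (fun _ => h2 y x)))

open Classical in
noncomputable def tbits (e : X ≃ Fin (Fintype.card X)) (g : X → ℝ)
    (j : Fin (Fintype.card X)) : Bool :=
  decide (g ((tperm e g).symm j) =
    (if h : j.1 = 0 then 0
     else g ((tperm e g).symm ⟨j.1 - 1, lt_of_le_of_lt (Nat.pred_le _) j.2⟩)))

lemma tbits_iff (e : X ≃ Fin (Fintype.card X)) (g : X → ℝ) (j : Fin (Fintype.card X)) :
    tbits e g j = true ↔ (fun j => g ((tperm e g).symm j)) j =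
      (if h : j.1 = 0 then 0
       else (fun j => g ((tperm e g).symm j)) ⟨j.1 - 1, lt_of_le_of_lt (Nat.pred_le _) j.2⟩) := by
  simp only [tbits]
  exact decide_eq_true_iff

end TimerAux

open TimerAux in
/-- Timer-equivalence on valuations `X → [0, C]` is an equivalence relation,
and it has at most `|X|! · 2^|X| · (C+1)^|X|` equivalence classes (i.e. there is a function
into `Fin (|X|! · 2^|X| · (C+1)^|X|)` whose fibers are exactly the classes). -/
theorem timer_equiv_is_equivalence_and_classes_bound {X : Type} [Fintype X] (C : ℕ) :
    Equivalence (TimerEquivRel (X := X) C) ∧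
    ∃ f : {f : X → ℝ // ∀ x, f x ∈ Set.Icc (0 : ℝ) C} →
        Fin (Nat.factorial (Fintype.card X) * 2 ^ Fintype.card X *
          (C + 1) ^ Fintype.card X),
      ∀ κ κ', TimerEquivRel C κ κ' ↔ f κ = f κ' := by
  classical
  constructor
  · constructor
    · intro κ x1 x2
      exact ⟨rfl, Iff.rfl, Iff.rfl⟩
    · intro κ κ' h x1 x2
      obtain ⟨h1, h2, h3⟩ := h x1 x2
      exact ⟨h1.symm, h2.symm, h3.symm⟩
    · intro a b c hab hbc x1 x2
      obtain ⟨h1, h2, h3⟩ := hab x1 x2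
      obtain ⟨k1, k2, k3⟩ := hbc x1 x2
      exact ⟨h1.trans k1, h2.trans k2, h3.trans k3⟩
  · set n := Fintype.card X with hn
    let e : X ≃ Fin n := Fintype.equivFin X
    let G : {f : X → ℝ // ∀ x, f x ∈ Set.Icc (0 : ℝ) C} →
        (X ≃ Fin n) × (Fin n → Bool) × (X → Fin (C + 1)) :=
      fun κ => (tperm e (fun x => Int.fract (κ.1 x)),
        tbits e (fun x => Int.fract (κ.1 x)),
        fun x => ⟨min (⌊κ.1 x⌋).toNat C, Nat.lt_succ_of_le (min_le_right _ _)⟩)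
    have hcard : Fintype.card ((X ≃ Fin n) × (Fin n → Bool) × (X → Fin (C + 1)))
        = n.factorial * 2 ^ n * (C + 1) ^ n := by
      rw [Fintype.card_prod, Fintype.card_prod, Fintype.card_equiv e,
        Fintype.card_fun, Fintype.card_fun]
      simp [hn, mul_assoc]
    let F := Fintype.equivFinOfCardEq hcard
    refine ⟨fun κ => F (G κ), fun κ κ' => ?_⟩
    rw [show (F (G κ) = F (G κ')) ↔ G κ = G κ' from
      ⟨fun h => F.injective h, congrArg F⟩]
    set g : X → ℝ := fun x => Int.fract (κ.1 x) with hg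
    set g' : X → ℝ := fun x => Int.fract (κ'.1 x) with hg'
    constructor
    · -- encode
      intro h
      have hle : ∀ a b, g a ≤ g b ↔ g' a ≤ g' b := fun a b => (h a b).2.2
      have hlt : ∀ a b, g a < g b ↔ g' a < g' b := fun a b => by
        rw [← not_le, ← not_le, hle b a]
      have heq : ∀ a b, g a = g b ↔ g' a = g' b := fun a b => by
        rw [le_antisymm_iff, le_antisymm_iff, hle a b, hle b a]
      have hzero : ∀ a, g a = 0 ↔ g' a = 0 := fun a => (h a a).2.1
      have hfloor : ∀ a, ⌊κ.1 a⌋ = ⌊κ'.1 a⌋ := fun a => (h a a).1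
      have hperm : tperm e g = tperm e g' := tperm_congr' hlt heq
      have hbits : tbits e g = tbits e g' := by
        funext j
        simp only [tbits, hperm]
        rw [decide_eq_decide]
        by_cases hj : j.1 = 0
        · rw [dif_pos hj, dif_pos hj]
          exact hzero _
        · rw [dif_neg hj, dif_neg hj]
          exact heq _ _
      have hi : (fun x => (⟨min (⌊κ.1 x⌋).toNat C, Nat.lt_succ_of_le (min_le_right _ _)⟩ :
          Fin (C + 1))) = fun x => ⟨min (⌊κ'.1 x⌋).toNat C, Nat.lt_succ_of_le (min_le_right _ _)⟩ := by
        funext x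
        exact Fin.ext (by rw [hfloor x])
      show (_, _, _) = (_, _, _)
      rw [hperm, hbits, hi]
    · -- decode
      intro h
      have hσ : tperm e g = tperm e g' := congrArg Prod.fst h
      have hc : tbits e g = tbits e g' := congrArg (fun p => p.2.1) h
      have hi : (fun x => (⟨min (⌊κ.1 x⌋).toNat C, Nat.lt_succ_of_le (min_le_right _ _)⟩ :
          Fin (C + 1))) = fun x => ⟨min (⌊κ'.1 x⌋).toNat C, Nat.lt_succ_of_le (min_le_right _ _)⟩ :=
        congrArg (fun p => p.2.2) h
      set σ := tperm e g with hσdef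
      -- monotone sorted sequences
      have hmono : ∀ i j : Fin n, i ≤ j → g (σ.symm i) ≤ g (σ.symm j) := by
        intro i j hij
        exact tperm_mono (a := σ.symm i) (b := σ.symm j)
          (by rw [← hσdef, Equiv.apply_symm_apply, Equiv.apply_symm_apply]; exact hij)
      have hmono' : ∀ i j : Fin n, i ≤ j → g' ((tperm e g').symm i) ≤ g' ((tperm e g').symm j) := by
        intro i j hij
        exact tperm_mono (a := (tperm e g').symm i) (b := (tperm e g').symm j)
          (by rw [Equiv.apply_symm_apply, Equiv.apply_symm_apply]; exact hij)
      have hnn : ∀ i : Fin n, (0 : ℝ) ≤ g (σ.symm i) := fun i => Int.fract_nonneg _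
      have hnn' : ∀ i : Fin n, (0 : ℝ) ≤ g' ((tperm e g').symm i) := fun i => Int.fract_nonneg _
      have hcb := fun j => tbits_iff e g j
      have hcb' := fun j => tbits_iff e g' j
      rw [← hσdef] at hcb
      intro x1 x2
      refine ⟨?_, ?_, ?_⟩
      · -- floors
        have := congrFun hi x1
        have hv : min (⌊κ.1 x1⌋).toNat C = min (⌊κ'.1 x1⌋).toNat C := congrArg Fin.val this
        have b1 : (0 : ℝ) ≤ κ.1 x1 := (κ.2 x1).1
        have b2 : κ.1 x1 ≤ C := (κ.2 x1).2
        have b1' : (0 : ℝ) ≤ κ'.1 x1 := (κ'.2 x1).1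
        have b2' : κ'.1 x1 ≤ C := (κ'.2 x1).2
        have f1 : (0 : ℤ) ≤ ⌊κ.1 x1⌋ := Int.floor_nonneg.mpr b1
        have f1' : (0 : ℤ) ≤ ⌊κ'.1 x1⌋ := Int.floor_nonneg.mpr b1'
        have f2 : ⌊κ.1 x1⌋ ≤ (C : ℤ) := by
          have := Int.floor_le_floor b2
          simpa using this
        have f2' : ⌊κ'.1 x1⌋ ≤ (C : ℤ) := by
          have := Int.floor_le_floor b2'
          simpa using this
        omega
      · -- zero fract
        have e1 : g x1 = g (σ.symm (σ x1)) := by rw [Equiv.symm_apply_apply]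
        have e1' : g' x1 = g' ((tperm e g').symm (σ x1)) := by
          rw [hσ] at hσdef ⊢
          rw [hσdef, Equiv.symm_apply_apply]
        have z1 : Int.fract (κ.1 x1) = 0 ↔ g (σ.symm (σ x1)) ≤ 0 := by
          rw [← e1]
          exact ⟨le_of_eq, fun hle => le_antisymm hle (Int.fract_nonneg _)⟩
        have z1' : Int.fract (κ'.1 x1) = 0 ↔ g' ((tperm e g').symm (σ x1)) ≤ 0 := by
          rw [← e1']
          exact ⟨le_of_eq, fun hle => le_antisymm hle (Int.fract_nonneg _)⟩
        rw [z1, z1']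
        have A := zero_iff_bits hmono hnn hcb (σ x1).1 (σ x1).2
        have A' := zero_iff_bits hmono' hnn' hcb' (σ x1).1 (σ x1).2
        rw [Fin.eta] at A A'
        rw [A, A', hc]
      · -- fract order
        rcases le_or_gt (σ x1) (σ x2) with hk | hk
        · have t1 : g x1 ≤ g x2 := tperm_mono (hσdef ▸ hk)
          have t2 : g' x1 ≤ g' x2 := tperm_mono (a := x1) (b := x2) (by rw [← hσ]; exact hk)
          exact iff_of_true t1 t2
        · set k1 := σ x1 with hk1
          set k2 := σ x2 with hk2
          have hd : k1 = ⟨k2.1 + (k1.1 - k2.1), by omega⟩ :=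
            Fin.ext (show k1.1 = k2.1 + (k1.1 - k2.1) by omega)
          have e1 : g x1 = g (σ.symm k1) := by rw [hk1, Equiv.symm_apply_apply]
          have e2 : g x2 = g (σ.symm k2) := by rw [hk2, Equiv.symm_apply_apply]
          have e1' : g' x1 = g' ((tperm e g').symm k1) := by
            rw [show k1 = tperm e g' x1 from by rw [hk1, ← hσ], Equiv.symm_apply_apply]
          have e2' : g' x2 = g' ((tperm e g').symm k2) := by
            rw [show k2 = tperm e g' x2 from by rw [hk2, ← hσ], Equiv.symm_apply_apply]
          have B := le_iff_bits hmono hcb (k1.1 - k2.1) k2 (by omega)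
          have B' := le_iff_bits hmono' hcb' (k1.1 - k2.1) k2 (by omega)
          rw [← hd] at B B'
          show g x1 ≤ g x2 ↔ g' x1 ≤ g' x2
          rw [e1, e2, e1', e2', B, B', hc]
  done
end

section
/- Let A be an automaton with timers. The timer-equivalence relation on configurations of A is a strong time-abstracting bisimulation: for all configurations (q1,κ1) ≅ (q2,κ2), (i) if (q1,κ1) takes a discrete transition on action i with update u to (q1',κ1'), then there is a discrete transition (q2,κ2) on the same action i with the same update u to some (q2',κ2') with (q1',κ1') ≅ (q2',κ2'); (ii) if (q1,κ1) →d1 (q1,κ1') is a delay transition with d1 > 0, then there exists a delay transition (q2,κ2) →d2 (q2,κ2') with d2 > 0 (possibly d2 ≠ d1) such that (q1,κ1') ≅ (q2,κ2'); and (iii) the same two properties hold with the roles of (q1,κ1) and (q2,κ2) swapped. -/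
set_option maxHeartbeats 1000000

namespace AwT

section Bisim

variable {X I Q : Type} [DecidableEq X]

lemma configEquiv_symm {A : AT X I Q} {c1 c2 : Q × (X → ℝ)} (h : ConfigEquiv A c1 c2) :
    ConfigEquiv A c2 c1 := by
  obtain ⟨hq, hv⟩ := h
  refine ⟨hq.symm, fun x hx => ?_⟩
  rw [← hq] at hx
  obtain ⟨hfl, hz, hord⟩ := hv x hx
  exact ⟨hfl.symm, hz.symm, fun y hy => (hord y (by rwa [hq])).symm⟩

lemma timeout_mem {A : AT X I Q} {q q' : Q} {x : X} {u : Upd X}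
    (hδ : A.δ q (Act.timeout x) = some (q', u)) : x ∈ A.χ q := by
  have hs : (A.δ q (Act.timeout x)).isSome := by rw [hδ]; rfl
  rcases (A.defined_iff q (Act.timeout x)).mp hs with ⟨i, hi⟩ | ⟨y, hy, hxy⟩
  · exact absurd hi (by simp)
  · injection hxy with h'
    subst h'
    exact hy

lemma val_zero {A : AT X I Q} {q : Q} {κ1 κ2 : X → ℝ} (hv : ValEquiv A q κ1 κ2)
    {x : X} (hx : x ∈ A.χ q) (h0 : κ1 x = 0) : κ2 x = 0 := by
  obtain ⟨hfl, hz, -⟩ := hv x hx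
  have hfl2 : ⌊κ2 x⌋ = 0 := by rw [← hfl, h0]; simp
  have hfr2 : Int.fract (κ2 x) = 0 := hz.mp (by rw [h0]; simp)
  have hsum := Int.floor_add_fract (κ2 x)
  rw [hfl2, hfr2] at hsum
  simpa using hsum.symm

lemma discrete_match {A : AT X I Q} {c1 c2 : Q × (X → ℝ)} (h : ConfigEquiv A c1 c2)
    (a : Act I X) (u : Upd X) (c1' : Q × (X → ℝ)) (hstep : DiscreteStep A c1 a u c1') :
    ∃ c2', DiscreteStep A c2 a u c2' ∧ ConfigEquiv A c1' c2' := by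
  obtain ⟨hq, hv⟩ := h
  obtain ⟨hδ, hto, hval⟩ := hstep
  have hto2 : ∀ x, a = Act.timeout x → c2.2 x = 0 := by
    intro x hax
    subst hax
    exact val_zero hv (timeout_mem hδ) (hto x rfl)
  cases u with
  | none =>
    have HV : ValEquiv A c1'.1 c1'.2 c2.2 := by
      intro x hx
      have hmx : x ∈ A.χ c1.1 := A.noupdate_sub _ _ _ hδ hx
      have hvx : c1'.2 x = c1.2 x := hval x hx
      obtain ⟨hfl, hz, hord⟩ := hv x hmx
      refine ⟨by rw [hvx]; exact hfl, by rw [hvx]; exact hz, ?_⟩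
      intro y hy
      have hmy : y ∈ A.χ c1.1 := A.noupdate_sub _ _ _ hδ hy
      have hvy : c1'.2 y = c1.2 y := hval y hy
      rw [hvx, hvy]
      exact hord y hmy
    exact ⟨(c1'.1, c2.2), ⟨by rw [← hq]; exact hδ, hto2, fun y _ => rfl⟩, rfl, HV⟩
  | some p =>
    obtain ⟨z, c⟩ := p
    have hupd : ∀ w : X, Function.update c2.2 z ((c : ℕ) : ℝ) w
        = if w = z then ((c : ℕ) : ℝ) else c2.2 w := fun w => Function.update_apply c2.2 z _ w
    have HV : ValEquiv A c1'.1 c1'.2 (Function.update c2.2 z ((c : ℕ) : ℝ)) := by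
      intro x hx
      by_cases hxz : x = z
      · have hvx : c1'.2 x = ((c : ℕ) : ℝ) := by
          have h' : c1'.2 x = if x = z then ((c : ℕ) : ℝ) else c1.2 x := hval x hx
          rwa [if_pos hxz] at h'
        have hwx : Function.update c2.2 z ((c : ℕ) : ℝ) x = ((c : ℕ) : ℝ) := by
          rw [hupd x, if_pos hxz]
        refine ⟨by rw [hvx, hwx], by rw [hvx, hwx], ?_⟩
        intro y hy
        by_cases hyz : y = z
        · have hvy : c1'.2 y = ((c : ℕ) : ℝ) := by
            have h' : c1'.2 y = if y = z then ((c : ℕ) : ℝ) else c1.2 y := hval y hy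
            rwa [if_pos hyz] at h'
          have hwy : Function.update c2.2 z ((c : ℕ) : ℝ) y = ((c : ℕ) : ℝ) := by
            rw [hupd y, if_pos hyz]
          rw [hvx, hvy, hwx, hwy]
        · have hvy : c1'.2 y = c1.2 y := by
            have h' : c1'.2 y = if y = z then ((c : ℕ) : ℝ) else c1.2 y := hval y hy
            rwa [if_neg hyz] at h'
          have hwy : Function.update c2.2 z ((c : ℕ) : ℝ) y = c2.2 y := by
            rw [hupd y, if_neg hyz]
          rw [hvx, hvy, hwx, hwy, Int.fract_natCast]
          simp [Int.fract_nonneg]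
      · have hmx : x ∈ A.χ c1.1 :=
          A.update_sub _ _ _ _ _ hδ (Finset.mem_sdiff.mpr ⟨hx, by simp [hxz]⟩)
        have hvx : c1'.2 x = c1.2 x := by
          have h' : c1'.2 x = if x = z then ((c : ℕ) : ℝ) else c1.2 x := hval x hx
          rwa [if_neg hxz] at h'
        have hwx : Function.update c2.2 z ((c : ℕ) : ℝ) x = c2.2 x := by
          rw [hupd x, if_neg hxz]
        obtain ⟨hfl, hz', hord⟩ := hv x hmx
        refine ⟨by rw [hvx, hwx]; exact hfl, by rw [hvx, hwx]; exact hz', ?_⟩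
        intro y hy
        by_cases hyz : y = z
        · have hvy : c1'.2 y = ((c : ℕ) : ℝ) := by
            have h' : c1'.2 y = if y = z then ((c : ℕ) : ℝ) else c1.2 y := hval y hy
            rwa [if_pos hyz] at h'
          have hwy : Function.update c2.2 z ((c : ℕ) : ℝ) y = ((c : ℕ) : ℝ) := by
            rw [hupd y, if_pos hyz]
          rw [hvx, hvy, hwx, hwy, Int.fract_natCast]
          constructor
          · intro h'
            exact (hz'.mp (le_antisymm h' (Int.fract_nonneg _))).le
          · intro h'
            exact (hz'.mpr (le_antisymm h' (Int.fract_nonneg _))).le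
        · have hmy : y ∈ A.χ c1.1 :=
            A.update_sub _ _ _ _ _ hδ (Finset.mem_sdiff.mpr ⟨hy, by simp [hyz]⟩)
          have hvy : c1'.2 y = c1.2 y := by
            have h' : c1'.2 y = if y = z then ((c : ℕ) : ℝ) else c1.2 y := hval y hy
            rwa [if_neg hyz] at h'
          have hwy : Function.update c2.2 z ((c : ℕ) : ℝ) y = c2.2 y := by
            rw [hupd y, if_neg hyz]
          rw [hvx, hvy, hwx, hwy]
          exact hord y hmy
    refine ⟨(c1'.1, Function.update c2.2 z ((c : ℕ) : ℝ)),
      ⟨by rw [← hq]; exact hδ, hto2, fun y _ => Function.update_apply c2.2 z _ y⟩, rfl, HV⟩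

lemma shift_floor_fract (v : ℝ) (m : ℤ) (e : ℝ) (he0 : 0 ≤ e) (he1 : e < 1) :
    (e ≤ Int.fract v → ⌊v - ((m : ℝ) + e)⌋ = ⌊v⌋ - m ∧
       Int.fract (v - ((m : ℝ) + e)) = Int.fract v - e) ∧
    (Int.fract v < e → ⌊v - ((m : ℝ) + e)⌋ = ⌊v⌋ - m - 1 ∧
       Int.fract (v - ((m : ℝ) + e)) = Int.fract v - e + 1) := by
  have hf0 := Int.fract_nonneg v
  have hf1 := Int.fract_lt_one v
  have hsum : ((⌊v⌋ : ℝ)) + Int.fract v = v := Int.floor_add_fract v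
  have hfr : Int.fract (v - ((m : ℝ) + e))
      = v - ((m : ℝ) + e) - (⌊v - ((m : ℝ) + e)⌋ : ℝ) := rfl
  constructor
  · intro hc
    have hfl : ⌊v - ((m : ℝ) + e)⌋ = ⌊v⌋ - m := by
      rw [Int.floor_eq_iff]
      push_cast
      constructor <;> linarith
    refine ⟨hfl, ?_⟩
    rw [hfr, hfl]
    push_cast
    linarith
  · intro hc
    have hfl : ⌊v - ((m : ℝ) + e)⌋ = ⌊v⌋ - m - 1 := by
      rw [Int.floor_eq_iff]
      push_cast
      constructor <;> linarith
    refine ⟨hfl, ?_⟩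
    rw [hfr, hfl]
    push_cast
    linarith

lemma fract_shift_ord {a b a' b' e e' : ℝ}
    (ha : 0 ≤ a) (ha1 : a < 1) (hb : 0 ≤ b) (hb1 : b < 1)
    (ha' : 0 ≤ a') (ha1' : a' < 1) (hb' : 0 ≤ b') (hb1' : b' < 1)
    (hsa : e ≤ a ↔ e' ≤ a') (hsb : e ≤ b ↔ e' ≤ b') (hab : a ≤ b ↔ a' ≤ b') :
    ((if e ≤ a then a - e else a - e + 1) ≤ (if e ≤ b then b - e else b - e + 1)) ↔
    ((if e' ≤ a' then a' - e' else a' - e' + 1) ≤ (if e' ≤ b' then b' - e' else b' - e' + 1)) := by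
  by_cases h1 : e ≤ a <;> by_cases h2 : e ≤ b
  · rw [if_pos h1, if_pos h2, if_pos (hsa.mp h1), if_pos (hsb.mp h2)]
    constructor <;> intro h
    · linarith [hab.mp (by linarith)]
    · linarith [hab.mpr (by linarith)]
  · rw [if_pos h1, if_neg h2, if_pos (hsa.mp h1), if_neg ((not_congr hsb).mp h2)]
    constructor <;> intro _ <;> linarith
  · rw [if_neg h1, if_pos h2, if_neg ((not_congr hsa).mp h1), if_pos (hsb.mp h2)]
    constructor <;> intro h <;> exfalso <;> linarith
  · rw [if_neg h1, if_neg h2, if_neg ((not_congr hsa).mp h1), if_neg ((not_congr hsb).mp h2)]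
    constructor <;> intro h
    · linarith [hab.mp (by linarith)]
    · linarith [hab.mpr (by linarith)]

lemma delay_match {A : AT X I Q} {c1 c2 : Q × (X → ℝ)} (h : ConfigEquiv A c1 c2)
    (d1 : ℝ) (c1' : Q × (X → ℝ)) (hd1 : 0 < d1) (hstep : DelayStep A c1 d1 c1') :
    ∃ d2 c2', 0 < d2 ∧ DelayStep A c2 d2 c2' ∧ ConfigEquiv A c1' c2' := by
  obtain ⟨hq, hv⟩ := h
  obtain ⟨-, hq', hle, hval⟩ := hstep
  have hme : ((⌊d1⌋ : ℝ)) + Int.fract d1 = d1 := Int.floor_add_fract d1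
  have he0 : 0 ≤ Int.fract d1 := Int.fract_nonneg d1
  have he1 : Int.fract d1 < 1 := Int.fract_lt_one d1
  have hm0 : (0 : ℝ) ≤ ((⌊d1⌋ : ℤ) : ℝ) := by
    exact_mod_cast Int.floor_nonneg.mpr hd1.le
  obtain ⟨e', he'0, he'1, he'pos, H1, H2⟩ : ∃ e' : ℝ, 0 ≤ e' ∧ e' < 1 ∧
      (0 < Int.fract d1 → 0 < e') ∧
      (∀ x ∈ A.χ c1.1, (Int.fract d1 ≤ Int.fract (c1.2 x) ↔ e' ≤ Int.fract (c2.2 x))) ∧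
      (∀ x ∈ A.χ c1.1, (Int.fract (c1.2 x) = Int.fract d1 ↔ Int.fract (c2.2 x) = e')) := by
    rcases he0.eq_or_lt with he | he
    · refine ⟨0, le_refl 0, one_pos, ?_, ?_, ?_⟩
      · intro hpos
        rw [← he] at hpos
        exact absurd hpos (lt_irrefl 0)
      · intro x hx
        rw [← he]
        simp [Int.fract_nonneg]
      · intro x hx
        rw [← he]
        exact (hv x hx).2.1
    · by_cases hA : ∃ x ∈ A.χ c1.1, Int.fract (c1.2 x) = Int.fract d1
      · obtain ⟨x0, hx0, hfx0⟩ := hA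
        refine ⟨Int.fract (c2.2 x0), Int.fract_nonneg _, Int.fract_lt_one _, ?_, ?_, ?_⟩
        · intro _
          rcases (Int.fract_nonneg (c2.2 x0)).eq_or_lt with h0 | h0
          · exfalso
            have h1' : Int.fract (c1.2 x0) = 0 := (hv x0 hx0).2.1.mpr h0.symm
            rw [hfx0] at h1'
            linarith
          · exact h0
        · intro x hx
          rw [← hfx0]
          exact (hv x0 hx0).2.2 x hx
        · intro x hx
          constructor
          · intro hxe
            have h1' : Int.fract (c2.2 x0) ≤ Int.fract (c2.2 x) :=
              ((hv x0 hx0).2.2 x hx).mp (by rw [hfx0, hxe])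
            have h2' : Int.fract (c2.2 x) ≤ Int.fract (c2.2 x0) :=
              ((hv x hx).2.2 x0 hx0).mp (by rw [hfx0, hxe])
            exact le_antisymm h2' h1'
          · intro hxe
            have h1' : Int.fract (c1.2 x0) ≤ Int.fract (c1.2 x) :=
              ((hv x0 hx0).2.2 x hx).mpr (by rw [hxe])
            have h2' : Int.fract (c1.2 x) ≤ Int.fract (c1.2 x0) :=
              ((hv x hx).2.2 x0 hx0).mpr (by rw [hxe])
            rw [← hfx0]
            exact le_antisymm h2' h1'
      · push_neg at hA
        set Lo := (A.χ c1.1).filter (fun x => Int.fract (c1.2 x) < Int.fract d1) with hLo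
        set Hi := (A.χ c1.1).filter (fun x => Int.fract d1 < Int.fract (c1.2 x)) with hHi
        have hLne : (insert (0:ℝ) (Lo.image (fun x => Int.fract (c2.2 x)))).Nonempty :=
          ⟨0, Finset.mem_insert_self _ _⟩
        have hUne : (insert (1:ℝ) (Hi.image (fun x => Int.fract (c2.2 x)))).Nonempty :=
          ⟨1, Finset.mem_insert_self _ _⟩
        set L := (insert (0:ℝ) (Lo.image (fun x => Int.fract (c2.2 x)))).max' hLne with hLdef
        set U := (insert (1:ℝ) (Hi.image (fun x => Int.fract (c2.2 x)))).min' hUne with hUdef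
        have hL0 : 0 ≤ L := Finset.le_max' _ 0 (Finset.mem_insert_self _ _)
        have hU1 : U ≤ 1 := Finset.min'_le _ 1 (Finset.mem_insert_self _ _)
        have hLle : ∀ x ∈ Lo, Int.fract (c2.2 x) ≤ L := fun x hx =>
          Finset.le_max' _ _ (Finset.mem_insert_of_mem
            (Finset.mem_image_of_mem (fun x => Int.fract (c2.2 x)) hx))
        have hUle : ∀ x ∈ Hi, U ≤ Int.fract (c2.2 x) := fun x hx =>
          Finset.min'_le _ _ (Finset.mem_insert_of_mem
            (Finset.mem_image_of_mem (fun x => Int.fract (c2.2 x)) hx))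
        have hLoHi : ∀ x ∈ Lo, ∀ y ∈ Hi, Int.fract (c2.2 x) < Int.fract (c2.2 y) := by
          intro x hx y hy
          obtain ⟨hxm, hxlt⟩ := Finset.mem_filter.mp hx
          obtain ⟨hym, hylt⟩ := Finset.mem_filter.mp hy
          have h12 : Int.fract (c1.2 x) < Int.fract (c1.2 y) := lt_trans hxlt hylt
          by_contra hcon
          push_neg at hcon
          exact absurd (((hv y hym).2.2 x hxm).mpr hcon) (not_le.mpr h12)
        have hHipos : ∀ y ∈ Hi, 0 < Int.fract (c2.2 y) := by
          intro y hy
          obtain ⟨hym, hylt⟩ := Finset.mem_filter.mp hy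
          rcases (Int.fract_nonneg (c2.2 y)).eq_or_lt with h0 | h0
          · exfalso
            have h1' := (hv y hym).2.1.mpr h0.symm
            linarith
          · exact h0
        have hLU : L < U := by
          have hLmem : L ∈ insert (0:ℝ) (Lo.image (fun x => Int.fract (c2.2 x))) :=
            Finset.max'_mem _ _
          have hUmem : U ∈ insert (1:ℝ) (Hi.image (fun x => Int.fract (c2.2 x))) :=
            Finset.min'_mem _ _
          rcases Finset.mem_insert.mp hLmem with hL | hL
          · rcases Finset.mem_insert.mp hUmem with hU | hU
            · rw [hL, hU]; norm_num
            · obtain ⟨y, hy, hyv⟩ := Finset.mem_image.mp hU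
              rw [hL, ← hyv]
              exact hHipos y hy
          · obtain ⟨x, hx, hxv⟩ := Finset.mem_image.mp hL
            rcases Finset.mem_insert.mp hUmem with hU | hU
            · rw [hU, ← hxv]
              exact Int.fract_lt_one _
            · obtain ⟨y, hy, hyv⟩ := Finset.mem_image.mp hU
              rw [← hxv, ← hyv]
              exact hLoHi x hx y hy
        refine ⟨(L + U) / 2, by linarith, by linarith, fun _ => by linarith, ?_, ?_⟩
        · intro x hx
          rcases lt_or_ge (Int.fract (c1.2 x)) (Int.fract d1) with hc | hc
          · have hxLo : x ∈ Lo := Finset.mem_filter.mpr ⟨hx, hc⟩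
            have hxL := hLle x hxLo
            constructor
            · intro h'; linarith
            · intro h'; linarith
          · have hne := hA x hx
            have hc' : Int.fract d1 < Int.fract (c1.2 x) := lt_of_le_of_ne hc (Ne.symm hne)
            have hxHi : x ∈ Hi := Finset.mem_filter.mpr ⟨hx, hc'⟩
            have hxU := hUle x hxHi
            constructor
            · intro _; linarith
            · intro _; linarith
        · intro x hx
          have hne := hA x hx
          constructor
          · intro h'; exact absurd h' hne
          · intro h'
            exfalso
            rcases lt_or_ge (Int.fract (c1.2 x)) (Int.fract d1) with hc | hc
            · have hxL := hLle x (Finset.mem_filter.mpr ⟨hx, hc⟩)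
              linarith
            · have hc' := lt_of_le_of_ne hc (Ne.symm (hA x hx))
              have hxU := hUle x (Finset.mem_filter.mpr ⟨hx, hc'⟩)
              linarith
  set d2 : ℝ := ((⌊d1⌋ : ℤ) : ℝ) + e' with hd2def
  have hd2pos : 0 < d2 := by
    rcases he0.eq_or_lt with he | he
    · rw [← he] at hme
      rw [hd2def]
      linarith
    · have := he'pos he
      rw [hd2def]
      linarith
  have KEY : ∀ x ∈ A.χ c1.1,
      ⌊c1.2 x - d1⌋ = ⌊c2.2 x - d2⌋ ∧
      Int.fract (c1.2 x - d1) = (if Int.fract d1 ≤ Int.fract (c1.2 x)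
        then Int.fract (c1.2 x) - Int.fract d1 else Int.fract (c1.2 x) - Int.fract d1 + 1) ∧
      Int.fract (c2.2 x - d2) = (if e' ≤ Int.fract (c2.2 x)
        then Int.fract (c2.2 x) - e' else Int.fract (c2.2 x) - e' + 1) := by
    intro x hx
    have S1 := shift_floor_fract (c1.2 x) ⌊d1⌋ (Int.fract d1) he0 he1
    have S2 := shift_floor_fract (c2.2 x) ⌊d1⌋ e' he'0 he'1
    rw [hme] at S1
    rw [← hd2def] at S2
    have hfl := (hv x hx).1
    rcases le_or_gt (Int.fract d1) (Int.fract (c1.2 x)) with hc | hc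
    · have hc2 : e' ≤ Int.fract (c2.2 x) := (H1 x hx).mp hc
      obtain ⟨f1, g1⟩ := S1.1 hc
      obtain ⟨f2, g2⟩ := S2.1 hc2
      exact ⟨by rw [f1, f2, hfl], by rw [g1, if_pos hc], by rw [g2, if_pos hc2]⟩
    · have hc2 : Int.fract (c2.2 x) < e' := by
        rcases lt_or_ge (Int.fract (c2.2 x)) e' with h' | h'
        · exact h'
        · exact absurd ((H1 x hx).mpr h') (not_le.mpr hc)
      obtain ⟨f1, g1⟩ := S1.2 hc
      obtain ⟨f2, g2⟩ := S2.2 hc2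
      exact ⟨by rw [f1, f2, hfl], by rw [g1, if_neg (not_le.mpr hc)],
        by rw [g2, if_neg (not_le.mpr hc2)]⟩
  have HV : ValEquiv A c1'.1 c1'.2 (fun x => c2.2 x - d2) := by
    intro x hx
    rw [hq'] at hx
    have hvx : c1'.2 x = c1.2 x - d1 := hval x hx
    obtain ⟨kfl, kf1, kf2⟩ := KEY x hx
    refine ⟨?_, ?_, ?_⟩
    · show ⌊c1'.2 x⌋ = ⌊c2.2 x - d2⌋
      rw [hvx]
      exact kfl
    · show Int.fract (c1'.2 x) = 0 ↔ Int.fract (c2.2 x - d2) = 0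
      rw [hvx, kf1, kf2]
      by_cases hc : Int.fract d1 ≤ Int.fract (c1.2 x)
      · rw [if_pos hc, if_pos ((H1 x hx).mp hc), sub_eq_zero, sub_eq_zero]
        exact H2 x hx
      · have hc2 : ¬ e' ≤ Int.fract (c2.2 x) := fun h' => hc ((H1 x hx).mpr h')
        rw [if_neg hc, if_neg hc2]
        constructor <;> intro h'
        · exfalso
          have := Int.fract_nonneg (c1.2 x)
          linarith
        · exfalso
          have := Int.fract_nonneg (c2.2 x)
          linarith
    · intro y hy
      rw [hq'] at hy
      have hvy : c1'.2 y = c1.2 y - d1 := hval y hy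
      obtain ⟨-, lf1, lf2⟩ := KEY y hy
      show Int.fract (c1'.2 x) ≤ Int.fract (c1'.2 y) ↔
        Int.fract (c2.2 x - d2) ≤ Int.fract (c2.2 y - d2)
      rw [hvx, hvy, kf1, lf1, kf2, lf2]
      exact fract_shift_ord (Int.fract_nonneg _) (Int.fract_lt_one _)
        (Int.fract_nonneg _) (Int.fract_lt_one _)
        (Int.fract_nonneg _) (Int.fract_lt_one _)
        (Int.fract_nonneg _) (Int.fract_lt_one _)
        (H1 x hx) (H1 y hy) ((hv x hx).2.2 y hy)
  refine ⟨d2, (c2.1, fun x => c2.2 x - d2), hd2pos, ⟨hd2pos.le, rfl, ?_, fun x _ => rfl⟩,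
    hq'.trans hq, HV⟩
  intro x hx
  rw [← hq] at hx
  have hfeas : 0 ≤ c1.2 x - d1 := by linarith [hle x hx]
  have h0 : 0 ≤ ⌊c2.2 x - d2⌋ := by
    rw [← (KEY x hx).1]
    exact Int.floor_nonneg.mpr hfeas
  have h0' : 0 ≤ c2.2 x - d2 := Int.floor_nonneg.mp h0
  linarith

end Bisim

end AwT

/-- Timer-equivalence of configurations is a strong time-abstracting
bisimulation: discrete transitions (same action and update) and positive delay transitions
can be matched from timer-equivalent configurations, in both directions, leading to
timer-equivalent configurations again. -/
theorem timer_equiv_bisimulation {X I Q : Type} [DecidableEq X] [Fintype X] [Fintype I]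
    [Fintype Q] (A : AwT.AT X I Q) (c1 c2 : Q × (X → ℝ))
    (h1 : ∀ x ∈ A.χ c1.1, 0 ≤ c1.2 x) (h2 : ∀ x ∈ A.χ c2.1, 0 ≤ c2.2 x)
    (h : AwT.ConfigEquiv A c1 c2) :
    (∀ a u c1', AwT.DiscreteStep A c1 a u c1' →
        ∃ c2', AwT.DiscreteStep A c2 a u c2' ∧ AwT.ConfigEquiv A c1' c2') ∧
    (∀ d1 c1', 0 < d1 → AwT.DelayStep A c1 d1 c1' →
        ∃ d2 c2', 0 < d2 ∧ AwT.DelayStep A c2 d2 c2' ∧ AwT.ConfigEquiv A c1' c2') ∧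
    (∀ a u c2', AwT.DiscreteStep A c2 a u c2' →
        ∃ c1', AwT.DiscreteStep A c1 a u c1' ∧ AwT.ConfigEquiv A c2' c1') ∧
    (∀ d2 c2', 0 < d2 → AwT.DelayStep A c2 d2 c2' →
        ∃ d1 c1', 0 < d1 ∧ AwT.DelayStep A c1 d1 c1' ∧ AwT.ConfigEquiv A c2' c1') := by
  have hsymm := AwT.configEquiv_symm h
  refine ⟨?_, ?_, ?_, ?_⟩
  · intro a u c1' hs
    exact AwT.discrete_match h a u c1' hs
  · intro d1 c1' hd hs
    exact AwT.delay_match h d1 c1' hd hs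
  · intro a u c2' hs
    exact AwT.discrete_match hsymm a u c2' hs
  · intro d2 c2' hd hs
    exact AwT.delay_match hsymm d2 c2' hd hs
end

section
/- Let A be an automaton with timers and ρ a padded timed run of A whose block graph G_ρ is cyclic. Then every padded timed run ρ' of A with the same untimed trace as ρ contains at least one race. -/
set_option maxHeartbeats 1000000

/-! A padded run `ρ'` with the same untimed trace as `ρ` performs the same transitions, only at
other times; call the *offset* of an action how much later it fires in `ρ'` than in `ρ`. A timer
started inside a block runs for its full duration in both runs, so all actions of a block share
one offset. If `ρ'` has no race, every edge `B ≺ B'` of the block graph of `ρ` forces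
`offset B < offset B'`: a zero delay from `B` to `B'` in `ρ` must become positive in `ρ'`, and a
timer of `B'` that `B` discards at value zero in `ρ` must still be positive when `B` discards it
in `ρ'`. Offsets therefore strictly increase around a cycle of the block graph, which is absurd. -/

namespace AwT

variable {X I Q : Type} [DecidableEq X] {A : AT X I Q} {n : ℕ}

section Clock

variable (σ : TimedRun A n)

/-- The time at which configuration `j` is entered; action `k` fires at `entryTime σ k.succ`. -/
noncomputable def entryTime (j : Fin (n + 1)) : ℝ :=
  ∑ i ∈ Finset.Iio j, σ.delays i

theorem entryTime_succ (k : Fin n) :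
    entryTime σ k.succ = entryTime σ k.castSucc + σ.delays k.castSucc := by
  rw [entryTime, entryTime, Finset.sum_Iio_add_eq_sum_Iic]
  rfl

theorem entryTime_succ_eq_sum_Iic (k : Fin n) :
    entryTime σ k.succ = ∑ ℓ ∈ Finset.Iic k, σ.delays ℓ.castSucc := by
  rw [entryTime_succ, entryTime, Finset.sum_Iio_add_eq_sum_Iic, Fin.sum_Iic_castSucc]

theorem delayBetween_eq_entryTime_sub {k k' : Fin n} (h : k ≤ k') :
    delayBetween σ k k' = entryTime σ k'.succ - entryTime σ k.succ := by
  rw [entryTime_succ_eq_sum_Iic, entryTime_succ_eq_sum_Iic, ← Finset.Iic_union_Ioc_eq_Iic h,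
    Finset.sum_union (Finset.Iic_disjoint_Ioc le_rfl), delayBetween]
  ring

theorem delayBetween_nonneg (k k' : Fin n) : 0 ≤ delayBetween σ k k' :=
  Finset.sum_nonneg fun _ _ => σ.delays_nonneg _

end Clock

section TimerValues

variable {σ : TimedRun A n} {k : Fin n} {x : X} {c : ℕ+}

theorem TimedRun.vals_succ_of_upds (hu : σ.upds k = some (x, c)) :
    x ∈ A.χ (σ.states k.succ) ∧ σ.vals k.succ x = c :=
  ⟨A.update_mem _ _ _ _ _ (hu ▸ σ.trans k), by simp [σ.val_step k x, hu]⟩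

theorem TimedRun.vals_succ_of_not_discards (hx : x ∈ A.χ (σ.states k.castSucc))
    (hto : σ.acts k ≠ .timeout x) (hnd : ¬ Discards σ k x) :
    x ∈ A.χ (σ.states k.succ) ∧ σ.vals k.succ x = σ.vals k.castSucc x - σ.delays k.castSucc := by
  simp only [Discards, not_and, not_or, not_not, not_exists] at hnd
  obtain ⟨hx', hnu⟩ := hnd hx hto
  refine ⟨hx', ?_⟩
  rw [σ.val_step k x]
  rcases hu : σ.upds k with _ | ⟨y, d⟩
  · rfl
  · have hxy : x ≠ y := by rintro rfl; exact hnu d hu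
    simp [hxy]

theorem TimedRun.vals_of_upds (hu : σ.upds k = some (x, c)) (j : Fin (n + 1)) (hkj : k.succ ≤ j)
    (hquiet : ∀ ℓ : Fin n, k < ℓ → ℓ.succ ≤ j → σ.acts ℓ ≠ .timeout x ∧ ¬ Discards σ ℓ x) :
    x ∈ A.χ (σ.states j) ∧ σ.vals j x = c - (entryTime σ j - entryTime σ k.succ) := by
  induction j using Fin.induction with
  | zero => exact absurd hkj (not_le.2 (Fin.succ_pos k))
  | succ i ih =>
    rcases (Fin.succ_le_succ_iff.1 hkj).eq_or_lt with rfl | hki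
    · simpa using σ.vals_succ_of_upds hu
    · obtain ⟨hx, hv⟩ := ih (Fin.succ_le_castSucc_iff.2 hki)
        fun ℓ h₁ h₂ => hquiet ℓ h₁ (h₂.trans (Fin.castSucc_le_succ i))
      obtain ⟨hto, hnd⟩ := hquiet i hki le_rfl
      obtain ⟨hx', hv'⟩ := σ.vals_succ_of_not_discards hx hto hnd
      exact ⟨hx', by rw [hv', hv, entryTime_succ σ i]; ring⟩

theorem TimedRun.vals_sub_delays_of_upds (hu : σ.upds k = some (x, c)) {m : Fin n} (hkm : k < m)
    (hquiet : ∀ ℓ, k < ℓ → ℓ < m → σ.acts ℓ ≠ .timeout x ∧ ¬ Discards σ ℓ x) :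
    σ.vals m.castSucc x - σ.delays m.castSucc = c - delayBetween σ k m := by
  have hv := (σ.vals_of_upds hu m.castSucc (Fin.succ_le_castSucc_iff.2 hkm)
    fun ℓ h₁ h₂ => hquiet ℓ h₁ (Fin.succ_le_castSucc_iff.1 h₂)).2
  rw [hv, delayBetween_eq_entryTime_sub σ hkm.le, entryTime_succ σ m]
  ring

theorem Triggers.delayBetween_eq {k' : Fin n} (ht : Triggers σ k k')
    (hu : σ.upds k = some (x, c)) : delayBetween σ k k' = c := by
  obtain ⟨hlt, y, d, hu', hto, hquiet⟩ := ht
  obtain ⟨rfl, rfl⟩ : x = y ∧ c = d := by simpa [hu] using hu'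
  have hv := σ.vals_sub_delays_of_upds hu hlt hquiet
  rw [σ.timeout_zero k' x hto] at hv
  linarith

theorem Triggers.entryTime_lt {k' : Fin n} (ht : Triggers σ k k') :
    entryTime σ k.succ < entryTime σ k'.succ := by
  obtain ⟨x, c, hu, -⟩ := ht.2
  have hd := ht.delayBetween_eq hu
  rw [delayBetween_eq_entryTime_sub σ ht.1.le] at hd
  have hc : (0 : ℝ) < c := by exact_mod_cast c.pos
  linarith

theorem not_timeout_of_not_triggers {ℓ : Fin n} (hu : σ.upds k = some (x, c))
    (hmax : ∀ p, ¬ Triggers σ k p) (hfirst : ∀ m, k < m → m < ℓ → ¬ Discards σ m x) :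
    ∀ p, k < p → p < ℓ → σ.acts p ≠ .timeout x := by
  intro p
  induction p using WellFoundedLT.induction with
  | _ p ih =>
    intro hkp hpℓ hto
    exact hmax p ⟨hkp, x, c, hu, hto, fun q hkq hqp =>
      ⟨ih q hqp hkq (hqp.trans hpℓ), hfirst q hkq (hqp.trans hpℓ)⟩⟩

theorem TimedRun.vals_sub_delays_at_first_discard {ℓ : Fin n} (hu : σ.upds k = some (x, c))
    (hmax : ∀ p, ¬ Triggers σ k p) (hkℓ : k < ℓ) (hfirst : ∀ m, k < m → m < ℓ → ¬ Discards σ m x) :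
    σ.vals ℓ.castSucc x - σ.delays ℓ.castSucc = c - delayBetween σ k ℓ :=
  σ.vals_sub_delays_of_upds hu hkℓ fun p h₁ h₂ =>
    ⟨not_timeout_of_not_triggers hu hmax hfirst p h₁ h₂, hfirst p h₁ h₂⟩

end TimerValues

section Blocks

variable {σ : TimedRun A n} {ks : List (Fin n)} {k : Fin n} {x : X} {c : ℕ+}

theorem FateOf.eq_disc0_iff {γ : Fate} (h : FateOf σ ks γ) (hlast : ks.getLast? = some k)
    (hu : σ.upds k = some (x, c)) : γ = .disc0 ↔ DiscardedAtZeroAfter σ k x := by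
  obtain ⟨hd, hnd⟩ := (h k hlast).2 x c hu
  by_cases hD : DiscardedAtZeroAfter σ k x
  · simp [hd hD, hD]
  · simp [hnd hD, hD]

theorem exists_fateOf (σ : TimedRun A n) (ks : List (Fin n)) : ∃ γ, FateOf σ ks γ := by
  classical
  rcases hlast : ks.getLast? with _ | k
  · exact ⟨.bot, fun k hk => by simp [hlast] at hk⟩
  rcases hu : σ.upds k with _ | ⟨x, c⟩
  · refine ⟨.bot, fun k' hk' => ?_⟩
    obtain rfl : k = k' := Option.some.inj (hlast.symm.trans hk')
    simp [hu]
  · refine ⟨if DiscardedAtZeroAfter σ k x then .disc0 else .cross, fun k' hk' => ?_⟩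
    obtain rfl : k = k' := Option.some.inj (hlast.symm.trans hk')
    simp +contextual [hu]

theorem discardedAtZeroAfter_iff {ℓ : Fin n} (hkℓ : k < ℓ) (hdisc : Discards σ ℓ x)
    (hfirst : ∀ m, k < m → m < ℓ → ¬ Discards σ m x) :
    DiscardedAtZeroAfter σ k x ↔ σ.vals ℓ.castSucc x - σ.delays ℓ.castSucc = 0 := by
  refine ⟨fun ⟨ℓ', hkℓ', hdisc', hfirst', hzero⟩ => ?_, fun hzero => ⟨ℓ, hkℓ, hdisc, hfirst, hzero⟩⟩
  obtain rfl : ℓ' = ℓ := le_antisymm (not_lt.1 fun h => hfirst' ℓ hkℓ h hdisc)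
    (not_lt.1 fun h => hfirst ℓ' hkℓ' h hdisc')
  exact hzero

theorem not_prec_self (hch : ks.IsChain (Triggers σ)) (γ₁ γ₂ : Fate) :
    ¬ Prec σ (ks, γ₁) (ks, γ₂) := by
  rintro (⟨k, hk, k', hk', hlt, hzero⟩ | ⟨-, k', x, c, hlast, -, ℓ, hℓ, hk'ℓ, -⟩)
  · -- firing times strictly increase along a block, so they are pairwise distinct on it
    have hinj := List.inj_on_of_nodup_map
      ((List.isChain_map (fun a => entryTime σ a.succ)).2
        (hch.imp fun _ _ h => h.entryTime_lt)).pairwise.nodup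
    rw [delayBetween_eq_entryTime_sub σ hlt.le] at hzero
    exact hlt.ne (hinj hk hk' (by linarith))
  · have hle := (hch.imp fun _ _ h => h.1.le).pairwise.rel_getLast hℓ
    rw [List.getLast_eq_iff_getLast?_eq_some _ |>.2 hlast] at hle
    exact hle.not_gt hk'ℓ

theorem not_prec_of_not_hasRace (hno : ¬ HasRace σ) {B B' : List (Fin n) × Fate}
    (hB : IsBlock σ B.1 B.2) (hB' : IsBlock σ B'.1 B'.2) : ¬ Prec σ B B' := by
  intro hp
  by_cases hBB' : B = B'
  · subst hBB'
    exact not_prec_self hB.2.1 B.2 B.2 hp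
  · exact hno ⟨B, B', hB, hB', hBB', Or.inl hp⟩

end Blocks

section Retiming

structure IsRetiming (ρ ρ' : TimedRun A n) : Prop where
  states_eq : ρ'.states = ρ.states
  acts_eq : ρ'.acts = ρ.acts
  upds_eq : ρ'.upds = ρ.upds

theorem length_eq_of_untime_eq {n' : ℕ} {ρ : TimedRun A n} {ρ' : TimedRun A n'}
    (h : untime ρ' = untime ρ) : n' = n := by
  simpa [untime] using congrArg (·.1.length) h

theorem IsRetiming.of_untime_eq {ρ ρ' : TimedRun A n} (h : untime ρ' = untime ρ) :
    IsRetiming ρ ρ' := by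
  simp only [untime, Prod.mk.injEq, List.ofFn_inj, funext_iff] at h
  obtain ⟨hsa, hlast⟩ := h
  have hstates : ρ'.states = ρ.states := funext fun j =>
    Fin.lastCases hlast (fun k => (hsa k).1) j
  have hacts : ρ'.acts = ρ.acts := funext fun k => (hsa k).2
  refine ⟨hstates, hacts, funext fun k => ?_⟩
  have htrans := ρ'.trans k
  rw [hstates, hacts, ρ.trans k] at htrans
  exact (Prod.mk.inj (Option.some.inj htrans)).2.symm

variable {ρ ρ' : TimedRun A n}

theorem IsRetiming.discards_iff (h : IsRetiming ρ ρ') {ℓ : Fin n} {x : X} :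
    Discards ρ' ℓ x ↔ Discards ρ ℓ x := by
  simp only [Discards, h.states_eq, h.acts_eq, h.upds_eq]

theorem IsRetiming.triggers_iff (h : IsRetiming ρ ρ') {k k' : Fin n} :
    Triggers ρ' k k' ↔ Triggers ρ k k' := by
  simp only [Triggers, h.acts_eq, h.upds_eq, h.discards_iff]

theorem IsRetiming.exists_isBlock (h : IsRetiming ρ ρ') {ks : List (Fin n)} {γ : Fate}
    (hB : IsBlock ρ ks γ) : ∃ γ', IsBlock ρ' ks γ' := by
  obtain ⟨hne, hch, hhead, hmax, -⟩ := hB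
  obtain ⟨γ', hγ'⟩ := exists_fateOf ρ' ks
  refine ⟨γ', hne, hch.imp fun _ _ => h.triggers_iff.2, ?_, ?_, hγ'⟩
  · simpa only [h.acts_eq] using hhead
  · simpa only [h.triggers_iff] using hmax

end Retiming

section Offsets

variable {ρ ρ' : TimedRun A n}

noncomputable def offset (ρ ρ' : TimedRun A n) (k : Fin n) : ℝ :=
  entryTime ρ' k.succ - entryTime ρ k.succ

theorem offset_sub_offset {k k' : Fin n} (hkk' : k ≤ k') :
    offset ρ ρ' k' - offset ρ ρ' k = delayBetween ρ' k k' - delayBetween ρ k k' := by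
  simp only [offset, delayBetween_eq_entryTime_sub _ hkk']
  ring

theorem IsRetiming.offset_eq_of_triggers (h : IsRetiming ρ ρ') {k k' : Fin n}
    (ht : Triggers ρ k k') : offset ρ ρ' k = offset ρ ρ' k' := by
  obtain ⟨x, c, hu, -⟩ := ht.2
  have hd := ht.delayBetween_eq hu
  have hd' := (h.triggers_iff.2 ht).delayBetween_eq (h.upds_eq ▸ hu)
  linarith [offset_sub_offset (ρ := ρ) (ρ' := ρ') ht.1.le]

noncomputable def blockOffset (ρ ρ' : TimedRun A n) (ks : List (Fin n)) : ℝ :=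
  ks.head?.elim 0 (offset ρ ρ')

theorem IsRetiming.blockOffset_eq (h : IsRetiming ρ ρ') {ks : List (Fin n)}
    (hch : ks.IsChain (Triggers ρ)) {a : Fin n} (ha : a ∈ ks) :
    blockOffset ρ ρ' ks = offset ρ ρ' a :=
  (hch.induction (fun b => offset ρ ρ' b = blockOffset ρ ρ' ks) ks
    (fun _ _ ht hb => (h.offset_eq_of_triggers ht).symm.trans hb)
    (fun hne => by simp [blockOffset, List.head?_eq_some_head hne]) a ha).symm

theorem IsRetiming.offset_lt_of_discard (h : IsRetiming ρ ρ') (hno : ¬ HasRace ρ')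
    {ks ks' : List (Fin n)} {γ : Fate} (hB : IsBlock ρ ks γ) (hB' : IsBlock ρ ks' .disc0)
    {k' ℓ : Fin n} {x : X} {c : ℕ+} (hlast : ks'.getLast? = some k')
    (hu : ρ.upds k' = some (x, c)) (hℓ : ℓ ∈ ks) (hk'ℓ : k' < ℓ) (hdisc : Discards ρ ℓ x)
    (hfirst : ∀ m, k' < m → m < ℓ → ¬ Discards ρ m x) :
    offset ρ ρ' ℓ < offset ρ ρ' k' := by
  obtain ⟨γ₁, hγ₁⟩ := h.exists_isBlock hB
  obtain ⟨γ₂, hγ₂⟩ := h.exists_isBlock hB'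
  have hu' : ρ'.upds k' = some (x, c) := h.upds_eq ▸ hu
  have hdisc' := h.discards_iff.2 hdisc
  have hfirst' : ∀ m, k' < m → m < ℓ → ¬ Discards ρ' m x := by
    simpa only [h.discards_iff] using hfirst
  have hzero : ρ.vals ℓ.castSucc x - ρ.delays ℓ.castSucc = 0 :=
    (discardedAtZeroAfter_iff hk'ℓ hdisc hfirst).1 ((hB'.2.2.2.2.eq_disc0_iff hlast hu).1 rfl)
  -- in `ρ'` the timer cannot reach zero at `ℓ` as well: that would be a race of the two blocks
  have hpos : ρ'.vals ℓ.castSucc x - ρ'.delays ℓ.castSucc ≠ 0 := fun hzero' =>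
    not_prec_of_not_hasRace hno (B := (ks, γ₁)) (B' := (ks', γ₂)) hγ₁ hγ₂ <| Or.inr
      ⟨(hγ₂.2.2.2.2.eq_disc0_iff hlast hu').2 ((discardedAtZeroAfter_iff hk'ℓ hdisc' hfirst').2
        hzero'), k', x, c, hlast, hu', ℓ, hℓ, hk'ℓ, hdisc', hfirst'⟩
  have hle := ρ'.delays_le ℓ.castSucc x hdisc'.1
  have hv := ρ.vals_sub_delays_at_first_discard hu (hB'.2.2.2.1 k' · hlast) hk'ℓ hfirst
  have hv' := ρ'.vals_sub_delays_at_first_discard hu' (hγ₂.2.2.2.1 k' · hlast) hk'ℓ hfirst'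
  have hlt : delayBetween ρ' k' ℓ < c := by
    have := lt_of_le_of_ne (sub_nonneg.2 hle) hpos.symm
    linarith
  linarith [offset_sub_offset (ρ := ρ) (ρ' := ρ') hk'ℓ.le]

theorem IsRetiming.blockOffset_lt_of_prec (h : IsRetiming ρ ρ') (hno : ¬ HasRace ρ')
    {B B' : List (Fin n) × Fate} (hB : IsBlock ρ B.1 B.2) (hB' : IsBlock ρ B'.1 B'.2)
    (hprec : Prec ρ B B') : blockOffset ρ ρ' B.1 < blockOffset ρ ρ' B'.1 := by
  rcases hprec with ⟨k, hk, k', hk', hlt, hzero⟩ |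
    ⟨hfate, k', x, c, hlast, hu, ℓ, hℓ, hk'ℓ, hdisc, hfirst⟩
  · obtain ⟨γ₁, hγ₁⟩ := h.exists_isBlock hB
    obtain ⟨γ₂, hγ₂⟩ := h.exists_isBlock hB'
    have hpos : 0 < delayBetween ρ' k k' := (delayBetween_nonneg ρ' k k').lt_of_ne fun h0 =>
      not_prec_of_not_hasRace hno (B := (B.1, γ₁)) (B' := (B'.1, γ₂)) hγ₁ hγ₂
        (Or.inl ⟨k, hk, k', hk', hlt, h0.symm⟩)
    rw [h.blockOffset_eq hB.2.1 hk, h.blockOffset_eq hB'.2.1 hk']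
    linarith [offset_sub_offset (ρ := ρ) (ρ' := ρ') hlt.le]
  · rw [h.blockOffset_eq hB.2.1 hℓ, h.blockOffset_eq hB'.2.1 (List.mem_of_mem_getLast? hlast)]
    exact h.offset_lt_of_discard hno hB (hfate ▸ hB') hlast hu hℓ hk'ℓ hdisc hfirst

end Offsets

end AwT

theorem cyclic_block_graph_forces_race_general {X I Q : Type} [DecidableEq X]
    (A : AwT.AT X I Q) (n : ℕ) (ρ : AwT.TimedRun A n) (hc : AwT.HasCycle ρ) :
    ∀ (n' : ℕ) (ρ' : AwT.TimedRun A n'), AwT.Padded ρ' → AwT.untime ρ' = AwT.untime ρ →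
      AwT.HasRace ρ' := by
  intro n' ρ' _ htrace
  obtain rfl := AwT.length_eq_of_untime_eq htrace
  have hre := AwT.IsRetiming.of_untime_eq htrace
  by_contra hno
  obtain ⟨m, f, hm, hblock, hcycle, hprec⟩ := hc
  have hmono : StrictMono fun j => AwT.blockOffset ρ ρ' (f j).1 := Fin.strictMono_iff_lt_succ.2
    fun j => hre.blockOffset_lt_of_prec hno (hblock _) (hblock _) (hprec j)
  have hpos : (0 : Fin (m + 1)) < Fin.last m := Fin.lt_def.2 hm
  exact (hmono hpos).ne (by simp only [hcycle])

/-- If the block graph of a padded timed run `ρ` of `A` is cyclic, then every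
padded timed run of `A` with the same untimed trace as `ρ` contains at least one race. -/
theorem cyclic_block_graph_forces_race {X I Q : Type} [DecidableEq X] [Fintype X] [Fintype I]
    [Fintype Q] (A : AwT.AT X I Q) (n : ℕ) (ρ : AwT.TimedRun A n)
    (hρ : AwT.Padded ρ) (hc : AwT.HasCycle ρ) :
    ∀ (n' : ℕ) (ρ' : AwT.TimedRun A n'), AwT.Padded ρ' → AwT.untime ρ' = AwT.untime ρ →
      AwT.HasRace ρ' :=
  cyclic_block_graph_forces_race_general A n ρ hc
end
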